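/- arXiv:2409.04277 — 8 statements merged into one kernel-verified Lean document; each statement's English description precedes it below -/
import Mathlib

section
/- Let g : ℝ → ℝ be a nonnegative C² function, let ω > 0, 0 < a < 1 and C > 0. Assume that −g''(x) + ω² g(x) ≤ C ω² e^{−aω|x|} for every x ∈ ℝ, that (g'(x) + ω g(x)) e^{−ωx} → 0 as x → +∞, and that (g'(x) − ω g(x)) e^{ωx} → 0 as x → −∞. Then g(x) ≤ (g(0) + C/(1 − a²)) e^{−aω|x|} for every x ∈ ℝ. -/
/-!
Put `M = g 0 + C / (1 - a²)` and `v = M e^{-aωx} - g`. Since `M (1 - a²) ≥ C`, the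
inequality on `g` gives `v'' ≤ ω² v` on `x ≥ 0`. Then `(v' + ω v) e^{-ωx}` is antitone on
`[0, ∞)` and tends to `0`, so `v' + ω v ≥ 0` there; hence `v e^{ωx}` is monotone on `[0, ∞)`
and `v ≥ v 0 = C / (1 - a²) ≥ 0`. The half-line `x ≤ 0` is the same argument for `g (-x)`.
-/

open Real Filter Topology Set

theorem hasDerivAt_exp_neg_mul (c x : ℝ) :
    HasDerivAt (fun x => exp (-(c * x))) (-c * exp (-(c * x))) x := by
  simpa [mul_comm] using ((hasDerivAt_id x).const_mul c).neg.exp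

theorem monotoneOn_mul_exp_neg_mul {v v' : ℝ → ℝ} {c : ℝ} {s : Set ℝ} (hs : Convex ℝ s)
    (hv : ∀ x, HasDerivAt v (v' x) x) (hle : ∀ x ∈ s, c * v x ≤ v' x) :
    MonotoneOn (fun x => v x * exp (-(c * x))) s := by
  have hd : ∀ x, HasDerivAt (fun x => v x * exp (-(c * x)))
      ((v' x - c * v x) * exp (-(c * x))) x := fun x =>
    ((hv x).mul (hasDerivAt_exp_neg_mul c x)).congr_deriv (by ring)
  refine monotoneOn_of_hasDerivWithinAt_nonneg hs
    (fun x _ => (hd x).continuousAt.continuousWithinAt) (fun x _ => (hd x).hasDerivWithinAt)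
    fun x hx => ?_
  have := sub_nonneg.mpr (hle x (interior_subset hx))
  positivity

theorem nonneg_of_deriv_deriv_le_sq_mul {v v' v'' : ℝ → ℝ} {ω : ℝ}
    (hv : ∀ x, HasDerivAt v (v' x) x) (hv' : ∀ x, HasDerivAt v' (v'' x) x)
    (hle : ∀ x, 0 ≤ x → v'' x ≤ ω ^ 2 * v x)
    (hlim : Tendsto (fun x => (v' x + ω * v x) * exp (-(ω * x))) atTop (𝓝 0))
    (h0 : 0 ≤ v 0) {x : ℝ} (hx : 0 ≤ x) : 0 ≤ v x := by
  have hw : ∀ y, 0 ≤ y → 0 ≤ v' y + ω * v y := by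
    intro y hy
    have hanti := monotoneOn_mul_exp_neg_mul (convex_Ici 0) (c := ω)
      (v := fun x => -(v' x + ω * v x))
      (fun x => ((hv' x).add ((hv x).const_mul ω)).neg) fun x hx => by
        nlinarith [hle x hx]
    have hneg : -(v' y + ω * v y) * exp (-(ω * y)) ≤ 0 := by
      refine ge_of_tendsto (by simpa using hlim.neg) ?_
      filter_upwards [eventually_ge_atTop y] with z hz
      simpa only [neg_mul] using hanti hy (hy.trans hz) hz
    nlinarith [exp_pos (-(ω * y))]
  have hmono := monotoneOn_mul_exp_neg_mul (convex_Ici 0) (c := -ω) hv fun x hx => by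
    linarith [hw x hx]
  have := hmono self_mem_Ici hx hx
  simp only [mul_zero, neg_zero, exp_zero, mul_one, neg_mul, neg_neg] at this
  exact (mul_nonneg_iff_of_pos_right (exp_pos _)).mp (h0.trans this)

theorem le_mul_exp_neg_of_neg_deriv_deriv_add_le {g g' g'' : ℝ → ℝ} {ω a C : ℝ}
    (hg : ∀ x, HasDerivAt g (g' x) x) (hg' : ∀ x, HasDerivAt g' (g'' x) x) (hg0 : 0 ≤ g 0)
    (hω : 0 < ω) (ha : |a| < 1) (hC : 0 ≤ C)
    (hineq : ∀ x, 0 ≤ x → -g'' x + ω ^ 2 * g x ≤ C * ω ^ 2 * exp (-(a * ω * x)))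
    (hlim : Tendsto (fun x => (g' x + ω * g x) * exp (-(ω * x))) atTop (𝓝 0))
    {x : ℝ} (hx : 0 ≤ x) : g x ≤ (g 0 + C / (1 - a ^ 2)) * exp (-(a * ω * x)) := by
  obtain ⟨ha₁, ha₂⟩ := abs_lt.mp ha
  have ha2 : 0 < 1 - a ^ 2 := by nlinarith
  set M := g 0 + C / (1 - a ^ 2)
  have hM : M * (1 - a ^ 2) = g 0 * (1 - a ^ 2) + C := by
    rw [add_mul, div_mul_cancel₀ _ ha2.ne']
  suffices 0 ≤ M * exp (-(a * ω * x)) - g x by linarith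
  have hv : ∀ x, HasDerivAt (fun x => M * exp (-(a * ω * x)) - g x)
      (M * (-(a * ω) * exp (-(a * ω * x))) - g' x) x := fun x =>
    ((hasDerivAt_exp_neg_mul _ x).const_mul M).sub (hg x)
  have hv' : ∀ x, HasDerivAt (fun x => M * (-(a * ω) * exp (-(a * ω * x))) - g' x)
      (M * (-(a * ω) * (-(a * ω) * exp (-(a * ω * x)))) - g'' x) x := fun x =>
    (((hasDerivAt_exp_neg_mul _ x).const_mul _).const_mul M).sub (hg' x)
  refine nonneg_of_deriv_deriv_le_sq_mul (ω := ω) hv hv' (fun y hy => ?_) ?_ ?_ hx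
  · have hCM : C * ω ^ 2 * exp (-(a * ω * y)) ≤
        M * (1 - a ^ 2) * ω ^ 2 * exp (-(a * ω * y)) := by
      gcongr
      nlinarith
    nlinarith [hineq y hy]
  · have hdecay :
        Tendsto (fun x => M * (ω - a * ω) * exp (-((1 + a) * ω * x))) atTop (𝓝 0) := by
      have : 0 < (1 + a) * ω := by nlinarith
      simpa using ((tendsto_exp_neg_atTop_nhds_zero.comp
        (tendsto_id.const_mul_atTop this)).const_mul (M * (ω - a * ω)))
    have h := hdecay.sub hlim
    rw [sub_zero] at h
    refine h.congr fun x => ?_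
    rw [show -((1 + a) * ω * x) = -(a * ω * x) + -(ω * x) by ring, exp_add]
    ring
  · simp only [mul_zero, neg_zero, exp_zero, mul_one, M]
    linarith [div_nonneg hC ha2.le]

/-- Exponential decay for solutions of elliptic differential inequalities
(Lemma on `-g'' + ω² g ≤ C ω² e^{-aω|x|}`). -/
theorem stmt_0 (g : ℝ → ℝ) (ω a C : ℝ)
    (hg : ContDiff ℝ 2 g) (hg0 : ∀ x, 0 ≤ g x)
    (hω : 0 < ω) (ha0 : 0 < a) (ha1 : a < 1) (hC : 0 < C)
    (hineq : ∀ x : ℝ,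
      -(deriv (deriv g) x) + ω ^ 2 * g x ≤ C * ω ^ 2 * Real.exp (-(a * ω * |x|)))
    (hlim_top : Tendsto (fun x => (deriv g x + ω * g x) * Real.exp (-(ω * x))) atTop (𝓝 0))
    (hlim_bot : Tendsto (fun x => (deriv g x - ω * g x) * Real.exp (ω * x)) atBot (𝓝 0)) :
    ∀ x : ℝ, g x ≤ (g 0 + C / (1 - a ^ 2)) * Real.exp (-(a * ω * |x|)) := by
  have hd : ∀ x, HasDerivAt g (deriv g x) x :=
    fun x => (hg.differentiable two_ne_zero x).hasDerivAt
  have hd2 : ∀ x, HasDerivAt (deriv g) (deriv (deriv g) x) x :=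
    fun x => ((hg.iterate_deriv' 1 1).differentiable one_ne_zero x).hasDerivAt
  have ha : |a| < 1 := abs_lt.mpr ⟨by linarith, ha1⟩
  intro x
  rcases le_total 0 x with hx | hx
  · rw [abs_of_nonneg hx]
    exact le_mul_exp_neg_of_neg_deriv_deriv_add_le hd hd2 (hg0 0) hω ha hC.le
      (fun y hy => by simpa [abs_of_nonneg hy] using hineq y) hlim_top hx
  · have hlim_refl :
        Tendsto (fun y => (-deriv g (-y) + ω * g (-y)) * exp (-(ω * y))) atTop (𝓝 0) := by
      have h := (hlim_bot.comp tendsto_neg_atTop_atBot).neg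
      rw [neg_zero] at h
      refine h.congr fun y => ?_
      simp only [Function.comp_apply, mul_neg]
      ring
    have := le_mul_exp_neg_of_neg_deriv_deriv_add_le (g := fun y => g (-y))
      (g' := fun y => -deriv g (-y)) (g'' := fun y => deriv (deriv g) (-y))
      (fun y => ((hd (-y)).comp y (hasDerivAt_neg' y)).congr_deriv (by ring))
      (fun y => ((hd2 (-y)).comp y (hasDerivAt_neg' y)).neg.congr_deriv (by ring))
      (by simpa using hg0 0) hω ha hC.le
      (fun y hy => by simpa [abs_of_nonpos (neg_nonpos.mpr hy)] using hineq (-y)) hlim_refl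
      (neg_nonneg.mpr hx)
    rw [abs_of_nonpos hx]
    simpa using this
end

section
/- Let a < b be real numbers, let ν_a, ν_b > 0, and let p ∈ [1, ∞) be a real number. Set ν := min(ν_a, ν_b). Then (∫_ℝ (e^{−ν_a (x−a)⁺} e^{−ν_b (x−b)⁻})^p dx)^{1/p} ≤ (2/(pν) + (b − a))^{1/p} e^{−ν (b − a)}. -/
/-!
Write `u⁺` for `max u 0` and `d(x) = (a - x)⁺ + (x - b)⁺` for the distance from `x` to `[a, b]`.
Since `(x - a)⁺ + (b - x)⁺ = (b - a) + d(x)` and `νa u + νb v ≥ ν (u + v)` for `u, v ≥ 0`, the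
`p`-th power of the integrand is at most `e^{-pν(b-a)} e^{-pν d(x)}`. The plateau `e^{-pν d(x)}`
integrates to `2/(pν) + (b - a)`: height one on `[a, b]` and two exponential tails of mass `1/(pν)`.
-/

open Real MeasureTheory Set

lemma min_mul_add_le_mul_add_mul {s t u v : ℝ} (hu : 0 ≤ u) (hv : 0 ≤ v) :
    min s t * (u + v) ≤ s * u + t * v := by
  nlinarith [mul_le_mul_of_nonneg_right (min_le_left s t) hu,
    mul_le_mul_of_nonneg_right (min_le_right s t) hv]

lemma max_sub_add_max_sub {a b : ℝ} (hab : a ≤ b) (x : ℝ) :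
    max (x - a) 0 + max (b - x) 0 = b - a + (max (a - x) 0 + max (x - b) 0) := by
  rcases le_total x a with hxa | hax
  · rw [max_eq_right (by linarith), max_eq_left (by linarith), max_eq_left (by linarith),
      max_eq_right (by linarith)]
    ring
  rcases le_total x b with hxb | hbx
  · rw [max_eq_left (by linarith), max_eq_left (by linarith), max_eq_right (by linarith),
      max_eq_right (by linarith)]
    ring
  · rw [max_eq_left (by linarith), max_eq_right (by linarith), max_eq_right (by linarith),
      max_eq_left (by linarith)]
    ring

noncomputable def expPlateau (c a b x : ℝ) : ℝ := exp (-(c * (max (a - x) 0 + max (x - b) 0)))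

section expPlateau

variable {c a b x : ℝ}

lemma expPlateau_of_le_left (hab : a ≤ b) (hx : x ≤ a) :
    expPlateau c a b x = exp (-(c * a)) * exp (c * x) := by
  rw [expPlateau, max_eq_left (by linarith), max_eq_right (by linarith), ← exp_add]
  ring_nf

lemma expPlateau_of_mem_Icc (hx : x ∈ Icc a b) : expPlateau c a b x = 1 := by
  rw [expPlateau, max_eq_right (by linarith [hx.1]), max_eq_right (by linarith [hx.2])]
  simp

lemma expPlateau_of_right_le (hab : a ≤ b) (hx : b ≤ x) :
    expPlateau c a b x = exp (c * b) * exp (-c * x) := by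
  rw [expPlateau, max_eq_right (by linarith), max_eq_left (by linarith), ← exp_add]
  ring_nf

lemma integrableOn_expPlateau_Iic (hc : 0 < c) (hab : a ≤ b) :
    IntegrableOn (expPlateau c a b) (Iic a) :=
  IntegrableOn.congr_fun ((integrableOn_exp_mul_Iic hc a).const_mul _)
    (fun _ hx ↦ (expPlateau_of_le_left hab hx).symm) measurableSet_Iic

lemma integrableOn_expPlateau_Ioc : IntegrableOn (expPlateau c a b) (Ioc a b) :=
  IntegrableOn.congr_fun (integrableOn_const measure_Ioc_lt_top.ne)
    (fun _ hx ↦ (expPlateau_of_mem_Icc (Ioc_subset_Icc_self hx)).symm) measurableSet_Ioc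

lemma integrableOn_expPlateau_Ioi (hc : 0 < c) (hab : a ≤ b) :
    IntegrableOn (expPlateau c a b) (Ioi b) :=
  IntegrableOn.congr_fun ((integrableOn_exp_mul_Ioi (neg_lt_zero.2 hc) b).const_mul _)
    (fun _ hx ↦ (expPlateau_of_right_le hab (le_of_lt hx)).symm) measurableSet_Ioi

lemma integral_expPlateau_Iic (hc : 0 < c) (hab : a ≤ b) :
    ∫ x in Iic a, expPlateau c a b x = 1 / c := by
  rw [setIntegral_congr_fun measurableSet_Iic (fun _ hx ↦ expPlateau_of_le_left hab hx),
    integral_const_mul, integral_exp_mul_Iic hc, mul_div_assoc', ← exp_add]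
  simp

lemma integral_expPlateau_Ioc (hab : a ≤ b) : ∫ x in Ioc a b, expPlateau c a b x = b - a := by
  rw [setIntegral_congr_fun measurableSet_Ioc
    (fun _ hx ↦ expPlateau_of_mem_Icc (Ioc_subset_Icc_self hx))]
  simp [hab]

lemma integral_expPlateau_Ioi (hc : 0 < c) (hab : a ≤ b) :
    ∫ x in Ioi b, expPlateau c a b x = 1 / c := by
  rw [setIntegral_congr_fun measurableSet_Ioi (fun _ hx ↦ expPlateau_of_right_le hab (le_of_lt hx)),
    integral_const_mul, integral_exp_mul_Ioi (neg_lt_zero.2 hc), mul_div_assoc', mul_neg,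
    neg_div_neg_eq, ← exp_add]
  simp

lemma integrable_expPlateau (hc : 0 < c) (hab : a ≤ b) : Integrable (expPlateau c a b) := by
  rw [← integrableOn_univ, ← Iic_union_Ioi (a := a), ← Ioc_union_Ioi_eq_Ioi hab]
  exact (integrableOn_expPlateau_Iic hc hab).union
    (integrableOn_expPlateau_Ioc.union (integrableOn_expPlateau_Ioi hc hab))

lemma integral_expPlateau (hc : 0 < c) (hab : a ≤ b) :
    ∫ x, expPlateau c a b x = 2 / c + (b - a) := by
  have hIoi : IntegrableOn (expPlateau c a b) (Ioi a) := (integrable_expPlateau hc hab).integrableOn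
  rw [← intervalIntegral.integral_Iic_add_Ioi (integrableOn_expPlateau_Iic hc hab) hIoi,
    ← Ioc_union_Ioi_eq_Ioi hab, setIntegral_union (Ioc_disjoint_Ioi le_rfl) measurableSet_Ioi
      integrableOn_expPlateau_Ioc (integrableOn_expPlateau_Ioi hc hab),
    integral_expPlateau_Iic hc hab, integral_expPlateau_Ioc hab, integral_expPlateau_Ioi hc hab]
  ring

end expPlateau

lemma rpow_exp_mul_exp_le_expPlateau {νa νb p a b : ℝ} (hab : a ≤ b) (hp : 0 ≤ p) (x : ℝ) :
    (exp (-(νa * max (x - a) 0)) * exp (-(νb * max (b - x) 0))) ^ p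
      ≤ exp (-(p * min νa νb * (b - a))) * expPlateau (p * min νa νb) a b x := by
  rw [← exp_add, ← exp_mul, expPlateau, ← exp_add, exp_le_exp]
  have h := min_mul_add_le_mul_add_mul (s := νa) (t := νb) (le_max_right (x - a) 0)
    (le_max_right (b - x) 0)
  rw [max_sub_add_max_sub hab] at h
  nlinarith

/-- `L^p` control of a product of two decaying translated exponentials. -/
theorem stmt_1 (a b νa νb p : ℝ) (hab : a < b) (hνa : 0 < νa) (hνb : 0 < νb)
    (hp : 1 ≤ p) :
    (∫ x : ℝ, (Real.exp (-(νa * max (x - a) 0)) * Real.exp (-(νb * max (b - x) 0))) ^ p) ^ (1 / p)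
      ≤ (2 / (p * min νa νb) + (b - a)) ^ (1 / p) * Real.exp (-(min νa νb * (b - a))) := by
  set ν := min νa νb
  have hp0 : 0 < p := by linarith
  have hc : 0 < p * ν := mul_pos hp0 (lt_min hνa hνb)
  have hint : ∫ x, (exp (-(νa * max (x - a) 0)) * exp (-(νb * max (b - x) 0))) ^ p
      ≤ exp (-(p * ν * (b - a))) * (2 / (p * ν) + (b - a)) := by
    rw [← integral_expPlateau hc hab.le, ← integral_const_mul]
    exact integral_mono_of_nonneg (ae_of_all _ fun x ↦ by positivity)
      ((integrable_expPlateau hc hab.le).const_mul _)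
      (ae_of_all _ (rpow_exp_mul_exp_le_expPlateau hab.le hp0.le))
  calc _ ≤ (exp (-(p * ν * (b - a))) * (2 / (p * ν) + (b - a))) ^ (1 / p) :=
        rpow_le_rpow (integral_nonneg fun x ↦ by positivity) hint (by positivity)
    _ = _ := by
      rw [mul_rpow (exp_nonneg _) (by linarith [div_pos two_pos hc]), ← exp_mul, mul_comm]
      congr 2
      field_simp
end

section
/- Let M ≥ 2 be an integer, let p ∈ [1, ∞) be a real number, let P ∈ 𝒫_M, let b_1, …, b_M > 0 and set b := min_k b_k. Let f_1, …, f_M : ℝ → ℝ be continuous functions and K > 0 be such that |f_k(x)| ≤ K e^{−b_k |x|} for every x ∈ ℝ and every k. Then there exists a constant C > 0, depending only on P, K, M and b, such that for every L > 0 and all real numbers a_1 < a_2 < … < a_M with a_{k+1} − a_k > L for every k, one has (∫_ℝ |P(f_1(x − a_1), …, f_M(x − a_M))|^p dx)^{1/p} ≤ C (2/(p b) + L)^{1/p} e^{−b L}. -/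
/-!
Every monomial of `P` contains two distinct variables `X_i`, `X_j`, and the remaining factors are
bounded, so at the point `x` it is at most a constant times `e^{-b|x - a_i|} e^{-b|x - a_j|}`.
By the power-mean inequality, `|P(…)|^p` is therefore dominated by a sum over the pairs `i < j` of
`e^{-c(|x - a_i| + |x - a_j|)}` with `c = p b`. Such a two-centre exponential has integral
`e^{-cD}(D + 1/c)`, where `D = a_j - a_i ≥ L`, and `δ e^{-cδ} ≤ 1/c` turns this into
`e^{-cL}(L + 2/c)`; taking `p`-th roots gives the claim.
-/

open Real MeasureTheory Set

lemma exp_neg_mul_mul_add_le {c L D : ℝ} (hc : 0 < c) (hL : 0 ≤ L) (hLD : L ≤ D) :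
    exp (-(c * D)) * (D + 1 / c) ≤ exp (-(c * L)) * (L + 2 / c) := by
  set δ := D - L
  have hδ : 0 ≤ δ := sub_nonneg.mpr hLD
  have hle_one : exp (-(c * δ)) ≤ 1 := exp_le_one_iff.mpr (by nlinarith)
  have hmul_le : exp (-(c * δ)) * δ ≤ 1 / c := by
    rw [le_div_iff₀ hc, mul_assoc, exp_neg, inv_mul_le_iff₀ (exp_pos _), mul_one]
    linarith [add_one_le_exp (c * δ), mul_comm δ c]
  calc exp (-(c * D)) * (D + 1 / c)
      = exp (-(c * L)) * (exp (-(c * δ)) * (L + 1 / c) + exp (-(c * δ)) * δ) := by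
        rw [show c * D = c * L + c * δ by ring, neg_add, exp_add]; ring
    _ ≤ exp (-(c * L)) * (1 * (L + 1 / c) + 1 / c) := by gcongr
    _ = exp (-(c * L)) * (L + 2 / c) := by ring

noncomputable def pairDecay (c u v x : ℝ) : ℝ := exp (-(c * (|x - u| + |x - v|)))

section PairDecay

variable {c u v : ℝ}

lemma continuous_pairDecay : Continuous (pairDecay c u v) := by
  unfold pairDecay
  fun_prop

lemma pairDecay_of_le_left (huv : u ≤ v) {x : ℝ} (hx : x ≤ u) :
    pairDecay c u v x = exp (-(c * (u + v))) * exp (2 * c * x) := by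
  rw [pairDecay, abs_of_nonpos (by linarith), abs_of_nonpos (by linarith), ← exp_add]
  ring_nf

lemma pairDecay_of_mem_Icc {x : ℝ} (hx : x ∈ Icc u v) :
    pairDecay c u v x = exp (-(c * (v - u))) := by
  rw [pairDecay, abs_of_nonneg (by linarith [hx.1]), abs_of_nonpos (by linarith [hx.2])]
  ring_nf

lemma pairDecay_of_right_le (huv : u ≤ v) {x : ℝ} (hx : v ≤ x) :
    pairDecay c u v x = exp (c * (u + v)) * exp (-(2 * c) * x) := by
  rw [pairDecay, abs_of_nonneg (by linarith), abs_of_nonneg (by linarith), ← exp_add]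
  ring_nf

lemma integrableOn_pairDecay_Iic (hc : 0 < c) (huv : u ≤ v) :
    IntegrableOn (pairDecay c u v) (Iic u) :=
  IntegrableOn.congr_fun ((integrableOn_exp_mul_Iic (by positivity) u).const_mul _)
    (fun _ hx ↦ (pairDecay_of_le_left huv hx).symm) measurableSet_Iic

lemma integrableOn_pairDecay_Ioi (hc : 0 < c) (huv : u ≤ v) :
    IntegrableOn (pairDecay c u v) (Ioi v) :=
  IntegrableOn.congr_fun
    ((integrableOn_exp_mul_Ioi (a := -(2 * c)) (by linarith) v).const_mul _)
    (fun _ hx ↦ (pairDecay_of_right_le huv (le_of_lt hx)).symm) measurableSet_Ioi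

lemma integrable_pairDecay (hc : 0 < c) (huv : u ≤ v) : Integrable (pairDecay c u v) := by
  have hIoi : IntegrableOn (pairDecay c u v) (Ioi u) := by
    rw [← Ioc_union_Ioi_eq_Ioi huv]
    exact (continuous_pairDecay.integrableOn_Ioc).union (integrableOn_pairDecay_Ioi hc huv)
  rw [← integrableOn_univ, ← Iic_union_Ioi (a := u)]
  exact (integrableOn_pairDecay_Iic hc huv).union hIoi

lemma integral_pairDecay (hc : 0 < c) (huv : u ≤ v) :
    ∫ x, pairDecay c u v x = exp (-(c * (v - u))) * (v - u + 1 / c) := by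
  have hI := integrable_pairDecay hc huv
  have hleft : ∫ x in Iic u, pairDecay c u v x = exp (-(c * (v - u))) / (2 * c) := by
    rw [setIntegral_congr_fun measurableSet_Iic fun _ hx ↦ pairDecay_of_le_left huv hx,
      integral_const_mul, integral_exp_mul_Iic (by positivity), mul_div_assoc', ← exp_add]
    ring_nf
  have hmid : ∫ x in u..v, pairDecay c u v x = exp (-(c * (v - u))) * (v - u) := by
    rw [intervalIntegral.integral_congr (g := fun _ ↦ exp (-(c * (v - u))))
      fun _ hx ↦ pairDecay_of_mem_Icc (uIcc_of_le huv ▸ hx)]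
    simp [mul_comm]
  have hright : ∫ x in Ioi v, pairDecay c u v x = exp (-(c * (v - u))) / (2 * c) := by
    rw [setIntegral_congr_fun measurableSet_Ioi fun _ hx ↦ pairDecay_of_right_le huv (le_of_lt hx),
      integral_const_mul, integral_exp_mul_Ioi (by linarith), neg_div_neg_eq, mul_div_assoc',
      ← exp_add]
    ring_nf
  rw [← intervalIntegral.integral_Iic_add_Ioi hI.integrableOn hI.integrableOn,
    ← intervalIntegral.integral_interval_add_Ioi hI.integrableOn hI.integrableOn,
    hleft, hmid, hright]
  field_simp
  ring

lemma pairDecay_eq_mul (x : ℝ) :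
    pairDecay c u v x = exp (-(c * |x - u|)) * exp (-(c * |x - v|)) := by
  rw [pairDecay, ← exp_add]
  ring_nf

lemma pairDecay_rpow (p x : ℝ) : pairDecay c u v x ^ p = pairDecay (p * c) u v x := by
  rw [pairDecay, pairDecay, ← exp_mul]
  ring_nf

lemma integral_pairDecay_le {L : ℝ} (hc : 0 < c) (hL : 0 ≤ L) (h : L ≤ v - u) :
    ∫ x, pairDecay c u v x ≤ exp (-(c * L)) * (L + 2 / c) := by
  rw [integral_pairDecay hc (by linarith)]
  exact exp_neg_mul_mul_add_le hc hL h

end PairDecay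

lemma prod_pow_le_mul_of_ne {ι : Type*} [Fintype ι] [DecidableEq ι] {g : ι → ℝ}
    (hg₀ : ∀ k, 0 ≤ g k) (hg₁ : ∀ k, g k ≤ 1) {d : ι → ℕ} {i j : ι} (hij : i ≠ j)
    (hi : d i ≠ 0) (hj : d j ≠ 0) :
    ∏ k, g k ^ d k ≤ g i * g j := by
  rw [← Finset.mul_prod_erase _ _ (Finset.mem_univ i),
    ← Finset.mul_prod_erase _ _ (Finset.mem_erase.mpr ⟨hij.symm, Finset.mem_univ j⟩), ← mul_assoc]
  calc g i ^ d i * g j ^ d j * ∏ k ∈ (Finset.univ.erase i).erase j, g k ^ d k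
      ≤ g i * g j * 1 :=
        mul_le_mul
          (mul_le_mul (pow_le_of_le_one (hg₀ i) (hg₁ i) hi) (pow_le_of_le_one (hg₀ j) (hg₁ j) hj)
            (pow_nonneg (hg₀ j) _) (hg₀ i))
          (Finset.prod_le_one (fun k _ ↦ pow_nonneg (hg₀ k) _)
            fun k _ ↦ pow_le_one₀ (hg₀ k) (hg₁ k))
          (Finset.prod_nonneg fun k _ ↦ pow_nonneg (hg₀ k) _) (mul_nonneg (hg₀ i) (hg₀ j))
    _ = g i * g j := mul_one _

noncomputable def majorantAt {σ : Type*} [Fintype σ] (P : MvPolynomial σ ℝ) (K : ℝ) : ℝ :=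
  ∑ d ∈ P.support, |P.coeff d| * K ^ ∑ k, d k

lemma majorantAt_nonneg {σ : Type*} [Fintype σ] (P : MvPolynomial σ ℝ) {K : ℝ} (hK : 0 ≤ K) :
    0 ≤ majorantAt P K :=
  Finset.sum_nonneg fun _ _ ↦ mul_nonneg (abs_nonneg _) (pow_nonneg hK _)

lemma prod_abs_pow_le_of_ne {ι : Type*} [Fintype ι] [DecidableEq ι] {y g : ι → ℝ} {K : ℝ}
    (hK : 0 ≤ K) (hy : ∀ k, |y k| ≤ K * g k) (hg₀ : ∀ k, 0 ≤ g k) (hg₁ : ∀ k, g k ≤ 1)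
    {d : ι → ℕ} {i j : ι} (hij : i ≠ j) (hi : d i ≠ 0) (hj : d j ≠ 0) :
    ∏ k, |y k| ^ d k ≤ (K ^ ∑ k, d k) * (g i * g j) :=
  calc ∏ k, |y k| ^ d k ≤ ∏ k, (K * g k) ^ d k :=
        Finset.prod_le_prod (fun _ _ ↦ pow_nonneg (abs_nonneg _) _)
          fun k _ ↦ pow_le_pow_left₀ (abs_nonneg _) (hy k) _
    _ = (K ^ ∑ k, d k) * ∏ k, g k ^ d k := by
        rw [Finset.prod_congr rfl fun k _ ↦ mul_pow K (g k) (d k), Finset.prod_mul_distrib,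
          Finset.prod_pow_eq_pow_sum]
    _ ≤ (K ^ ∑ k, d k) * (g i * g j) :=
        mul_le_mul_of_nonneg_left (prod_pow_le_mul_of_ne hg₀ hg₁ hij hi hj) (pow_nonneg hK _)

lemma abs_eval_le_majorantAt_mul {σ : Type*} [Fintype σ] [DecidableEq σ]
    {P : MvPolynomial σ ℝ} (hP : ∀ d ∈ P.support, 2 ≤ d.support.card) {y g : σ → ℝ} {K B : ℝ}
    (hK : 0 ≤ K) (hy : ∀ k, |y k| ≤ K * g k) (hg₀ : ∀ k, 0 ≤ g k) (hg₁ : ∀ k, g k ≤ 1)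
    (hB : ∀ i j, i ≠ j → g i * g j ≤ B) :
    |MvPolynomial.eval y P| ≤ majorantAt P K * B := by
  rw [MvPolynomial.eval_eq', majorantAt, Finset.sum_mul]
  refine (Finset.abs_sum_le_sum_abs _ _).trans (Finset.sum_le_sum fun d hd ↦ ?_)
  obtain ⟨i, hi, j, hj, hij⟩ := Finset.one_lt_card.mp (hP d hd)
  rw [abs_mul, Finset.abs_prod, mul_assoc]
  simp only [abs_pow]
  refine mul_le_mul_of_nonneg_left ?_ (abs_nonneg _)
  exact (prod_abs_pow_le_of_ne hK hy hg₀ hg₁ hij (Finsupp.mem_support_iff.mp hi)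
    (Finsupp.mem_support_iff.mp hj)).trans
    (mul_le_mul_of_nonneg_left (hB i j hij) (pow_nonneg hK _))

def increasingPairs (ι : Type*) [Fintype ι] [LinearOrder ι] : Finset (ι × ι) :=
  Finset.univ.filter fun q ↦ q.1 < q.2

lemma mul_le_sum_increasingPairs {ι : Type*} [Fintype ι] [LinearOrder ι] {g : ι → ℝ}
    (hg₀ : ∀ k, 0 ≤ g k) {i j : ι} (hij : i ≠ j) :
    g i * g j ≤ ∑ q ∈ increasingPairs ι, g q.1 * g q.2 := by
  have hle : ∀ {i j}, i < j → g i * g j ≤ ∑ q ∈ increasingPairs ι, g q.1 * g q.2 :=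
    fun {i j} h ↦ Finset.single_le_sum (f := fun q : ι × ι ↦ g q.1 * g q.2)
      (fun _ _ ↦ mul_nonneg (hg₀ _) (hg₀ _))
      (show (i, j) ∈ increasingPairs ι by simpa [increasingPairs] using h)
  rcases hij.lt_or_gt with h | h
  · exact hle h
  · exact mul_comm (g i) (g j) ▸ hle h

lemma lt_sub_of_consecutive_gaps {M : ℕ} {L : ℝ} {a : Fin M → ℝ} (hL : 0 ≤ L)
    (hgap : ∀ (k : ℕ) (hk : k + 1 < M), L < a ⟨k + 1, hk⟩ - a ⟨k, Nat.lt_of_succ_lt hk⟩)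
    {i j : Fin M} (hij : i < j) : L < a j - a i := by
  obtain ⟨n, hn⟩ := j
  induction n with
  | zero => exact absurd (Fin.lt_def.mp hij) (Nat.not_lt_zero _)
  | succ n ih =>
    have hstep := hgap n hn
    rcases Nat.lt_succ_iff_lt_or_eq.mp (Fin.lt_def.mp hij) with h | h
    · linarith [ih (Nat.lt_of_succ_lt hn) (Fin.lt_def.mpr h)]
    · rwa [show i = ⟨n, Nat.lt_of_succ_lt hn⟩ from Fin.ext h]

section Main

variable {M : ℕ} {p β K : ℝ} {b : Fin M → ℝ} {P : MvPolynomial (Fin M) ℝ} {f : Fin M → ℝ → ℝ}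

lemma rpow_abs_eval_le_sum_pairDecay (hp : 1 ≤ p) (hβ : 0 ≤ β) (hβb : ∀ k, β ≤ b k)
    (hP : ∀ d ∈ P.support, 2 ≤ d.support.card)
    (hf : ∀ k x, |f k x| ≤ K * exp (-(b k * |x|))) (a : Fin M → ℝ) (x : ℝ) :
    |MvPolynomial.eval (fun k ↦ f k (x - a k)) P| ^ p ≤
      majorantAt P |K| ^ p * ((increasingPairs (Fin M)).card : ℝ) ^ (p - 1) *
        ∑ q ∈ increasingPairs (Fin M), pairDecay (p * β) (a q.1) (a q.2) x := by
  set g : Fin M → ℝ := fun k ↦ exp (-(β * |x - a k|))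
  have hg₀ : ∀ k, 0 ≤ g k := fun k ↦ (exp_pos _).le
  have hg₁ : ∀ k, g k ≤ 1 := fun k ↦
    exp_le_one_iff.mpr (neg_nonpos.mpr (mul_nonneg hβ (abs_nonneg _)))
  have hy : ∀ k, |f k (x - a k)| ≤ |K| * g k := fun k ↦
    (hf k _).trans <| mul_le_mul (le_abs_self K)
      (exp_le_exp.mpr (neg_le_neg (mul_le_mul_of_nonneg_right (hβb k) (abs_nonneg _))))
      (exp_pos _).le (abs_nonneg K)
  have habs : |MvPolynomial.eval (fun k ↦ f k (x - a k)) P| ≤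
      majorantAt P |K| * ∑ q ∈ increasingPairs (Fin M), g q.1 * g q.2 :=
    abs_eval_le_majorantAt_mul hP (abs_nonneg K) hy hg₀ hg₁
      fun _ _ hij ↦ mul_le_sum_increasingPairs hg₀ hij
  have hpair : ∀ q : Fin M × Fin M, (g q.1 * g q.2) ^ p = pairDecay (p * β) (a q.1) (a q.2) x :=
    fun q ↦ by rw [← pairDecay_rpow, pairDecay_eq_mul]
  have hp₀ : 0 ≤ p := by linarith
  calc |MvPolynomial.eval (fun k ↦ f k (x - a k)) P| ^ p
      ≤ (majorantAt P |K| * ∑ q ∈ increasingPairs (Fin M), g q.1 * g q.2) ^ p :=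
        rpow_le_rpow (abs_nonneg _) habs hp₀
    _ = majorantAt P |K| ^ p * (∑ q ∈ increasingPairs (Fin M), g q.1 * g q.2) ^ p :=
        mul_rpow (majorantAt_nonneg P (abs_nonneg K))
          (Finset.sum_nonneg fun _ _ ↦ mul_nonneg (hg₀ _) (hg₀ _))
    _ ≤ majorantAt P |K| ^ p * (((increasingPairs (Fin M)).card : ℝ) ^ (p - 1) *
          ∑ q ∈ increasingPairs (Fin M), (g q.1 * g q.2) ^ p) := by
        gcongr
        · exact rpow_nonneg (majorantAt_nonneg P (abs_nonneg K)) p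
        · exact rpow_sum_le_const_mul_sum_rpow_of_nonneg _ hp
            fun _ _ ↦ mul_nonneg (hg₀ _) (hg₀ _)
    _ = _ := by simp only [hpair, mul_assoc]

lemma integral_rpow_abs_eval_le (hp : 1 ≤ p) (hβ : 0 < β) (hβb : ∀ k, β ≤ b k)
    (hP : ∀ d ∈ P.support, 2 ≤ d.support.card)
    (hf : ∀ k x, |f k x| ≤ K * exp (-(b k * |x|))) {L : ℝ} {a : Fin M → ℝ} (hL : 0 ≤ L)
    (hsep : ∀ i j, i < j → L ≤ a j - a i) :
    ∫ x, |MvPolynomial.eval (fun k ↦ f k (x - a k)) P| ^ p ≤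
      majorantAt P |K| ^ p * ((increasingPairs (Fin M)).card : ℝ) ^ (p - 1) *
        (increasingPairs (Fin M)).card * (exp (-(p * β * L)) * (L + 2 / (p * β))) := by
  set S := increasingPairs (Fin M)
  have hc : 0 < p * β := mul_pos (by linarith) hβ
  have hsepS : ∀ q ∈ S, L ≤ a q.2 - a q.1 := fun q hq ↦
    hsep _ _ (by simpa [S, increasingPairs] using hq)
  have hint : ∀ q ∈ S, Integrable (pairDecay (p * β) (a q.1) (a q.2)) := fun q hq ↦
    integrable_pairDecay hc (by linarith [hsepS q hq])
  have hC : 0 ≤ majorantAt P |K| ^ p * (S.card : ℝ) ^ (p - 1) :=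
    mul_nonneg (rpow_nonneg (majorantAt_nonneg P (abs_nonneg K)) _) (rpow_nonneg (by positivity) _)
  calc ∫ x, |MvPolynomial.eval (fun k ↦ f k (x - a k)) P| ^ p
      ≤ ∫ x, majorantAt P |K| ^ p * (S.card : ℝ) ^ (p - 1) *
          ∑ q ∈ S, pairDecay (p * β) (a q.1) (a q.2) x :=
        integral_mono_of_nonneg (ae_of_all _ fun _ ↦ rpow_nonneg (abs_nonneg _) _)
          ((integrable_finsetSum S hint).const_mul _)
          (ae_of_all _ (rpow_abs_eval_le_sum_pairDecay hp hβ.le hβb hP hf a))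
    _ = majorantAt P |K| ^ p * (S.card : ℝ) ^ (p - 1) *
          ∑ q ∈ S, ∫ x, pairDecay (p * β) (a q.1) (a q.2) x := by
        rw [integral_const_mul, integral_finsetSum S hint]
    _ ≤ majorantAt P |K| ^ p * (S.card : ℝ) ^ (p - 1) *
          (S.card • (exp (-(p * β * L)) * (L + 2 / (p * β)))) := by
        gcongr
        exact Finset.sum_le_card_nsmul _ _ _ fun q hq ↦
          integral_pairDecay_le hc hL (hsepS q hq)
    _ = _ := by rw [nsmul_eq_mul]; ring

theorem exists_integral_rpow_abs_eval_le (hp : 1 ≤ p) (hβ : 0 < β) (hβb : ∀ k, β ≤ b k)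
    (hP : ∀ d ∈ P.support, 2 ≤ d.support.card)
    (hf : ∀ k x, |f k x| ≤ K * exp (-(b k * |x|))) :
    ∃ C > 0, ∀ L > 0, ∀ a : Fin M → ℝ,
      (∀ (k : ℕ) (hk : k + 1 < M), L < a ⟨k + 1, hk⟩ - a ⟨k, Nat.lt_of_succ_lt hk⟩) →
      (∫ x, |MvPolynomial.eval (fun k ↦ f k (x - a k)) P| ^ p) ^ (1 / p)
        ≤ C * (2 / (p * β) + L) ^ (1 / p) * exp (-(β * L)) := by
  set A := majorantAt P |K| ^ p * ((increasingPairs (Fin M)).card : ℝ) ^ (p - 1) *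
    (increasingPairs (Fin M)).card
  have hA : 0 ≤ A := mul_nonneg (mul_nonneg (rpow_nonneg (majorantAt_nonneg P (abs_nonneg K)) _)
    (rpow_nonneg (by positivity) _)) (by positivity)
  have hp₀ : 0 < p := by linarith
  refine ⟨A ^ (1 / p) + 1, by positivity, fun L hL a hgap ↦ ?_⟩
  have hI := integral_rpow_abs_eval_le hp hβ hβb hP hf hL.le
    fun i j hij ↦ (lt_sub_of_consecutive_gaps hL.le hgap hij).le
  have hexp : exp (-(p * β * L)) ^ (1 / p) = exp (-(β * L)) := by
    rw [← exp_mul]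
    field_simp
  calc (∫ x, |MvPolynomial.eval (fun k ↦ f k (x - a k)) P| ^ p) ^ (1 / p)
      ≤ (A * (exp (-(p * β * L)) * (L + 2 / (p * β)))) ^ (1 / p) :=
        rpow_le_rpow (integral_nonneg fun _ ↦ rpow_nonneg (abs_nonneg _) _) hI (by positivity)
    _ = A ^ (1 / p) * (2 / (p * β) + L) ^ (1 / p) * exp (-(β * L)) := by
        rw [mul_rpow hA (by positivity), mul_rpow (exp_pos _).le (by positivity), hexp,
          add_comm L]
        ring
    _ ≤ (A ^ (1 / p) + 1) * (2 / (p * β) + L) ^ (1 / p) * exp (-(β * L)) := by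
        gcongr
        linarith

end Main

/-- `L^p` control of a coupled multivariate polynomial evaluated at translated
exponentially decaying functions. Here `𝒫_M` is encoded as: every monomial of `P`
with nonzero coefficient involves at least two distinct variables. -/
theorem stmt_2 (M : ℕ) (hM : 2 ≤ M) (p : ℝ) (hp : 1 ≤ p)
    (P : MvPolynomial (Fin M) ℝ)
    (hP : ∀ d ∈ P.support, 2 ≤ d.support.card)
    (b : Fin M → ℝ) (hb : ∀ k, 0 < b k)
    (f : Fin M → ℝ → ℝ)
    (K : ℝ)
    (hbound : ∀ k x, |f k x| ≤ K * Real.exp (-(b k * |x|))) :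
    ∃ C > 0, ∀ L > 0, ∀ a : Fin M → ℝ,
      (∀ (k : ℕ) (hk : k + 1 < M), L < a ⟨k + 1, hk⟩ - a ⟨k, Nat.lt_of_succ_lt hk⟩) →
      (∫ x : ℝ, |MvPolynomial.eval (fun k => f k (x - a k)) P| ^ p) ^ (1 / p)
        ≤ C * (2 / (p * Finset.univ.inf' ⟨⟨0, by omega⟩, Finset.mem_univ _⟩ b) + L) ^ (1 / p)
          * Real.exp (-(Finset.univ.inf' ⟨⟨0, by omega⟩, Finset.mem_univ _⟩ b * L)) :=
  exists_integral_rpow_abs_eval_le hp ((Finset.lt_inf'_iff _).mpr fun k _ ↦ hb k)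
    (fun k ↦ Finset.inf'_le _ (Finset.mem_univ k)) hP hbound
end

section
/- Let ξ ∈ (0,1) and c ∈ ℝ satisfy c² ξ² = 4(1 − ξ) F(1 − ξ). Then 1 − ξ ≥ c² / (c_s² + M), where M := sup_{r ∈ [0,1]} |f''(r)|. -/
/-!
Since `f 1 = 0` and `|f''| ≤ M` on `[0, 1]`, Taylor's bound at `1` gives
`f r ≤ f'(1) (r - 1) + M/2 (1 - r)²`. Integrating over `[1 - ξ, 1]` yields
`F(1 - ξ) ≤ c_s² ξ²/4 + M ξ³/6`, so the equation gives
`c² ξ² ≤ (1 - ξ)(c_s² ξ² + 2M ξ³/3) ≤ (1 - ξ)(c_s² + M) ξ²`.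
-/

open Real MeasureTheory Set

section
variable {f : ℝ → ℝ} {a b M : ℝ}

theorem le_taylor_add_of_deriv_deriv_le (hf : DifferentiableOn ℝ f (Icc a b))
    (hf' : DifferentiableOn ℝ (deriv f) (Icc a b)) (hM : ∀ x ∈ Ioo a b, deriv (deriv f) x ≤ M)
    {x : ℝ} (hx : x ∈ Icc a b) :
    f x ≤ f b + deriv f b * (x - b) + M / 2 * (b - x) ^ 2 := by
  have hb : b ∈ Icc a b := right_mem_Icc.2 (hx.1.trans hx.2)
  have hderiv_sub : ∀ y ∈ Icc a b, deriv f b - deriv f y ≤ M * (b - y) := fun y hy =>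
    (convex_Icc a b).image_sub_le_mul_sub_of_deriv_le hf'.continuousOn
      (hf'.mono interior_subset) (by rwa [interior_Icc]) y hy b hb hy.2
  let g : ℝ → ℝ := fun y => f y - deriv f b * (y - b) - M / 2 * (b - y) ^ 2
  have hg_deriv : ∀ y ∈ Ioo a b,
      HasDerivAt g (deriv f y - deriv f b + M * (b - y)) y := by
    intro y hy
    have hfy : HasDerivAt f (deriv f y) y :=
      (hf.differentiableAt (Icc_mem_nhds hy.1 hy.2)).hasDerivAt
    refine ((hfy.sub (((hasDerivAt_id y).sub_const b).const_mul (deriv f b))).sub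
      (((hasDerivAt_id y).const_sub b).pow 2 |>.const_mul (M / 2))).congr_deriv ?_
    simp only [id]; push_cast; ring
  have hg_mono : MonotoneOn g (Icc a b) := by
    refine monotoneOn_of_deriv_nonneg (convex_Icc a b) ?_ ?_ ?_
    · exact (hf.continuousOn.sub (by fun_prop)).sub (by fun_prop)
    · rw [interior_Icc]
      exact fun y hy => (hg_deriv y hy).differentiableAt.differentiableWithinAt
    · rw [interior_Icc]
      intro y hy
      rw [(hg_deriv y hy).deriv]
      linarith [hderiv_sub y (Ioo_subset_Icc_self hy)]
  have := hg_mono hx hb hx.2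
  simp only [g, sub_self] at this
  linarith

theorem integral_le_of_deriv_deriv_le (hab : a ≤ b) (hf : DifferentiableOn ℝ f (Icc a b))
    (hf' : DifferentiableOn ℝ (deriv f) (Icc a b)) (hM : ∀ x ∈ Ioo a b, deriv (deriv f) x ≤ M) :
    ∫ x in a..b, f x ≤ f b * (b - a) - deriv f b / 2 * (b - a) ^ 2 + M / 6 * (b - a) ^ 3 := by
  let p : ℝ → ℝ := fun x => f b + deriv f b * (x - b) + M / 2 * (b - x) ^ 2
  have hp : Continuous p := by fun_prop
  have hp_integral : ∫ x in a..b, p x =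
      f b * (b - a) - deriv f b / 2 * (b - a) ^ 2 + M / 6 * (b - a) ^ 3 := by
    have hP : ∀ x ∈ uIcc a b, HasDerivAt
        (fun x => f b * x + deriv f b / 2 * (x - b) ^ 2 - M / 6 * (b - x) ^ 3) (p x) x := by
      intro x _
      refine ((((hasDerivAt_id x).const_mul (f b)).add
        ((((hasDerivAt_id x).sub_const b).pow 2).const_mul (deriv f b / 2))).sub
        ((((hasDerivAt_id x).const_sub b).pow 3).const_mul (M / 6))).congr_deriv ?_
      simp only [p, id]; push_cast; ring
    rw [intervalIntegral.integral_eq_sub_of_hasDerivAt hP (hp.intervalIntegrable a b)]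
    ring
  rw [← hp_integral]
  refine intervalIntegral.integral_mono_on hab ?_ (hp.intervalIntegrable a b)
    fun x hx => le_taylor_add_of_deriv_deriv_le hf hf' hM hx
  exact (hf.continuousOn.mono (uIcc_of_le hab).subset).intervalIntegrable
end

/-- Lower bound `1 - ξ ≥ c² / (c_s² + M)` for a zero of `c²ξ² = 4(1-ξ)F(1-ξ)`. -/
theorem stmt_3 (f : ℝ → ℝ) (U : Set ℝ) (hU : IsOpen U) (hUIcc : Set.Icc (0:ℝ) 1 ⊆ U)
    (hf : ContDiffOn ℝ 2 f U) (hf1 : f 1 = 0) (hf'1 : deriv f 1 < 0)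
    (cs M : ℝ) (hcs : cs = Real.sqrt (-(2 * deriv f 1)))
    (hM : M = sSup ((fun r => |deriv (deriv f) r|) '' Set.Icc (0:ℝ) 1))
    (F : ℝ → ℝ) (hF : ∀ r, F r = ∫ ρ in r..1, f ρ)
    (ξ c : ℝ) (hξ : ξ ∈ Set.Ioo (0:ℝ) 1)
    (heq : c ^ 2 * ξ ^ 2 = 4 * (1 - ξ) * F (1 - ξ)) :
    1 - ξ ≥ c ^ 2 / (cs ^ 2 + M) := by
  obtain ⟨hξ0, hξ1⟩ := hξ
  have hf' : ContDiffOn ℝ 1 (deriv f) U := hf.deriv_of_isOpen hU (by norm_num)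
  have hM_bound : ∀ r ∈ Icc (0:ℝ) 1, |deriv (deriv f) r| ≤ M := fun r hr =>
    hM ▸ le_csSup (isCompact_Icc.image_of_continuousOn
      ((hf'.continuousOn_deriv_of_isOpen hU le_rfl).mono hUIcc).abs).bddAbove ⟨r, hr, rfl⟩
  have hM0 : 0 ≤ M := (abs_nonneg _).trans (hM_bound 1 (right_mem_Icc.2 zero_le_one))
  have hsub : Icc (1 - ξ) 1 ⊆ U := (Icc_subset_Icc (by linarith) le_rfl).trans hUIcc
  have hF_le : F (1 - ξ) ≤ -deriv f 1 / 2 * ξ ^ 2 + M / 6 * ξ ^ 3 := by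
    have := integral_le_of_deriv_deriv_le (M := M) (by linarith : 1 - ξ ≤ 1)
      ((hf.differentiableOn (by norm_num)).mono hsub)
      ((hf'.differentiableOn one_ne_zero).mono hsub)
      fun x hx => (le_abs_self _).trans (hM_bound x ⟨by linarith [hx.1], hx.2.le⟩)
    rw [hf1, sub_sub_cancel] at this
    rw [hF]
    linarith
  have hcs2 : cs ^ 2 = -(2 * deriv f 1) := by rw [hcs, sq_sqrt]; linarith
  have hkey : c ^ 2 * ξ ^ 2 ≤ (1 - ξ) * (cs ^ 2 + M) * ξ ^ 2 := calc
    c ^ 2 * ξ ^ 2 = 4 * (1 - ξ) * F (1 - ξ) := heq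
    _ ≤ 4 * (1 - ξ) * (-deriv f 1 / 2 * ξ ^ 2 + M / 6 * ξ ^ 3) :=
      mul_le_mul_of_nonneg_left hF_le (by linarith)
    _ ≤ (1 - ξ) * (cs ^ 2 + M) * ξ ^ 2 := by
      rw [hcs2]
      nlinarith [mul_nonneg (mul_nonneg (sub_nonneg.2 hξ1.le) hM0) (pow_pos hξ0 2).le]
  rw [ge_iff_le, div_le_iff₀ (by rw [hcs2]; linarith)]
  exact le_of_mul_le_mul_right hkey (by positivity)
end

section
/- Assume k := 2 f''(1) + 6 f'(1) ≠ 0. Let 0 < c₀ < c_s and let ξ : (c₀, c_s) → (0,1) satisfy N_c(ξ(c)) = 0 for every c ∈ (c₀, c_s) and ξ(c) → 0 as c → c_s⁻. Then ξ(c)/(c_s² − c²) → −3/k as c → c_s⁻. -/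
/-!
Write `G := N_{c_s}`. Since `N_{c_s}(x) - N_c(x) = (c_s² - c²) x²`, a zero `ξ = ξ(c)` of `N_c`
satisfies `ξ / (c_s² - c²) = ξ³ / G(ξ)`. Differentiating `F(1 - x)` gives `-f(1 - x)`, and the
choice `c_s² = -2 f'(1)` together with `f(1) = F(1) = 0` makes `G`, `G'`, `G''` vanish at `0`,
while `G'''(0) = -2k`. Hence `G(x) / x³ → -k/3` as `x → 0⁺` (l'Hôpital twice), and
`ξ(c) → 0⁺` gives the limit `-3/k`.
-/

open Real MeasureTheory Filter Topology

lemma tendsto_div_of_hasDerivAt_zero {G : ℝ → ℝ} {L : ℝ} (hG : HasDerivAt G L 0)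
    (hG0 : G 0 = 0) : Tendsto (fun x => G x / x) (𝓝[>] 0) (𝓝 L) := by
  refine ((hasDerivAt_iff_tendsto_slope.mp hG).mono_left
    (nhdsWithin_mono 0 fun x hx => ne_of_gt hx)).congr fun x => ?_
  simp [slope_def_field, hG0]

lemma tendsto_div_pow_succ_of_hasDerivAt {G G' : ℝ → ℝ} {L : ℝ} {n : ℕ}
    (hG : ∀ᶠ x in 𝓝 0, HasDerivAt G (G' x) x) (hG0 : G 0 = 0)
    (hlim : Tendsto (fun x => G' x / x ^ n) (𝓝[>] 0) (𝓝 L)) :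
    Tendsto (fun x => G x / x ^ (n + 1)) (𝓝[>] 0) (𝓝 (L / (n + 1))) := by
  have hpos : ∀ᶠ x : ℝ in 𝓝[>] 0, 0 < x := self_mem_nhdsWithin
  refine HasDerivAt.lhopital_zero_nhdsGT (nhdsWithin_le_nhds hG)
    (.of_forall fun x => by simpa using hasDerivAt_pow (n + 1) x)
    (hpos.mono fun x hx => by positivity) ?_ ?_ ?_
  · simpa [hG0] using hG.self_of_nhds.continuousAt.tendsto.mono_left nhdsWithin_le_nhds
  · exact ((continuous_pow (n + 1)).tendsto' 0 0 (by simp)).mono_left nhdsWithin_le_nhds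
  · refine (hlim.div_const (n + 1)).congr' (hpos.mono fun x hx => ?_)
    field_simp

lemma tendsto_div_pow_three_of_hasDerivAt {G G₁ G₂ : ℝ → ℝ} {L : ℝ}
    (hG : ∀ᶠ x in 𝓝 0, HasDerivAt G (G₁ x) x) (hG₁ : ∀ᶠ x in 𝓝 0, HasDerivAt G₁ (G₂ x) x)
    (hG₂ : HasDerivAt G₂ L 0) (hG0 : G 0 = 0) (hG₁0 : G₁ 0 = 0) (hG₂0 : G₂ 0 = 0) :
    Tendsto (fun x => G x / x ^ 3) (𝓝[>] 0) (𝓝 (L / 6)) := by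
  have h₂ := tendsto_div_of_hasDerivAt_zero hG₂ hG₂0
  have h₁ := tendsto_div_pow_succ_of_hasDerivAt (n := 1) hG₁ hG₁0 (by simpa using h₂)
  convert tendsto_div_pow_succ_of_hasDerivAt (n := 2) hG hG0 h₁ using 2
  norm_num [div_div]

lemma eventually_hasDerivAt_integral_left {f : ℝ → ℝ} {U : Set ℝ} {b : ℝ} (hU : IsOpen U)
    (hf : ContinuousOn f U) (hb : b ∈ U) :
    ∀ᶠ r in 𝓝 b, HasDerivAt (fun r => ∫ ρ in r..b, f ρ) (-f r) r := by
  obtain ⟨ε, hε, hball⟩ := Metric.isOpen_iff.mp hU b hb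
  filter_upwards [Metric.ball_mem_nhds b hε] with r hr
  have hsub : Set.uIcc r b ⊆ U := fun y hy =>
    hball (Set.OrdConnected.uIcc_subset (by rw [Real.ball_eq_Ioo]; infer_instance) hr
      (Metric.mem_ball_self hε) hy)
  exact intervalIntegral.integral_hasDerivAt_left (hf.mono hsub).intervalIntegrable
    (hf.stronglyMeasurableAtFilter hU r (hball hr))
    (hf.continuousAt (hU.mem_nhds (hball hr)))

def Nc (F : ℝ → ℝ) (c x : ℝ) : ℝ := c ^ 2 * x ^ 2 - 4 * (1 - x) * F (1 - x)

lemma Nc_sub_Nc (F : ℝ → ℝ) (c c' x : ℝ) :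
    Nc F c' x - Nc F c x = (c' ^ 2 - c ^ 2) * x ^ 2 := by
  unfold Nc; ring

section Derivatives

variable {f f' F : ℝ → ℝ} (c : ℝ)

lemma hasDerivAt_Nc {x : ℝ} (hF : HasDerivAt F (-f (1 - x)) (1 - x)) :
    HasDerivAt (Nc F c) (2 * c ^ 2 * x - 4 * ((1 - x) * f (1 - x) - F (1 - x))) x := by
  have := ((hasDerivAt_pow 2 x).const_mul (c ^ 2)).fun_sub
    ((((hasDerivAt_id' x).const_sub 1).const_mul 4).fun_mul (hF.comp_const_sub 1 x))
  exact this.congr_deriv (by push_cast; ring)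

lemma hasDerivAt_Nc_deriv {x : ℝ} (hF : HasDerivAt F (-f (1 - x)) (1 - x))
    (hf : HasDerivAt f (f' (1 - x)) (1 - x)) :
    HasDerivAt (fun y => 2 * c ^ 2 * y - 4 * ((1 - y) * f (1 - y) - F (1 - y)))
      (2 * c ^ 2 + 8 * f (1 - x) + 4 * ((1 - x) * f' (1 - x))) x := by
  have := ((hasDerivAt_id' x).const_mul (2 * c ^ 2)).fun_sub
    (((((hasDerivAt_id' x).const_sub 1).fun_mul (hf.comp_const_sub 1 x)).fun_sub
      (hF.comp_const_sub 1 x)).const_mul 4)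
  exact this.congr_deriv (by ring)

lemma hasDerivAt_Nc_deriv_deriv {f'' : ℝ} (hf : HasDerivAt f (f' 1) 1)
    (hf' : HasDerivAt f' f'' 1) :
    HasDerivAt (fun y => 2 * c ^ 2 + 8 * f (1 - y) + 4 * ((1 - y) * f' (1 - y)))
      (-12 * f' 1 - 4 * f'') 0 := by
  rw [← sub_zero (1 : ℝ)] at hf hf'
  have := (((hf.comp_const_sub 1 0).const_mul 8).const_add (2 * c ^ 2)).fun_add
    ((((hasDerivAt_id' 0).const_sub 1).fun_mul (hf'.comp_const_sub 1 0)).const_mul 4)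
  exact this.congr_deriv (by norm_num; ring)

lemma tendsto_Nc_div_pow_three {f'' : ℝ} (hF : ∀ᶠ r in 𝓝 1, HasDerivAt F (-f r) r)
    (hf : ∀ᶠ r in 𝓝 1, HasDerivAt f (f' r) r) (hf' : HasDerivAt f' f'' 1)
    (hF1 : F 1 = 0) (hf1 : f 1 = 0) (hc : c ^ 2 = -2 * f' 1) :
    Tendsto (fun x => Nc F c x / x ^ 3) (𝓝[>] 0) (𝓝 (-(2 * f'' + 6 * f' 1) / 3)) := by
  have hreflect : Tendsto (fun x : ℝ => 1 - x) (𝓝 0) (𝓝 1) :=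
    (continuous_const.sub continuous_id).tendsto' 0 1 (by simp)
  have hF₀ := hreflect.eventually hF
  have hf₀ := hreflect.eventually hf
  convert tendsto_div_pow_three_of_hasDerivAt (hF₀.mono fun x => hasDerivAt_Nc c)
    (hF₀.and hf₀ |>.mono fun x h => hasDerivAt_Nc_deriv c h.1 h.2)
    (hasDerivAt_Nc_deriv_deriv c hf.self_of_nhds hf') ?_ ?_ ?_ using 2
  · ring
  · simp [Nc, hF1]
  · simp [hF1, hf1]
  · simp [hf1, hc]; ring

end Derivatives

theorem stmt_5_general (f : ℝ → ℝ) (U : Set ℝ) (hU : IsOpen U) (hUIcc : Set.Icc (0:ℝ) 1 ⊆ U)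
    (hf : ContDiffOn ℝ 3 f U) (hf1 : f 1 = 0) (hf'1 : deriv f 1 < 0)
    (cs k : ℝ) (hcs : cs = Real.sqrt (-(2 * deriv f 1)))
    (hk : k = 2 * deriv (deriv f) 1 + 6 * deriv f 1) (hk0 : k ≠ 0)
    (F : ℝ → ℝ) (hF : ∀ r, F r = ∫ ρ in r..1, f ρ)
    (c₀ : ℝ) (hc₀cs : c₀ < cs)
    (ξ : ℝ → ℝ)
    (hξmem : ∀ c ∈ Set.Ioo c₀ cs, ξ c ∈ Set.Ioo (0:ℝ) 1)
    (hzero : ∀ c ∈ Set.Ioo c₀ cs,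
      c ^ 2 * (ξ c) ^ 2 - 4 * (1 - ξ c) * F (1 - ξ c) = 0)
    (hξ0 : Tendsto ξ (𝓝[<] cs) (𝓝 0)) :
    Tendsto (fun c => ξ c / (cs ^ 2 - c ^ 2)) (𝓝[<] cs) (𝓝 (-3 / k)) := by
  have h1U : (1 : ℝ) ∈ U := hUIcc ⟨zero_le_one, le_rfl⟩
  have hdf : ∀ y ∈ U, HasDerivAt f (deriv f y) y := fun y hy =>
    (hf.differentiableOn (by norm_num) y hy).differentiableAt (hU.mem_nhds hy) |>.hasDerivAt
  have hdf' : HasDerivAt (deriv f) (deriv (deriv f) 1) 1 :=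
    ((hf.deriv_of_isOpen hU (m := 2) (by norm_num)).differentiableOn (by norm_num) 1 h1U
      |>.differentiableAt (hU.mem_nhds h1U)).hasDerivAt
  have hFeq : F = fun r => ∫ ρ in r..1, f ρ := funext hF
  have hG : Tendsto (fun x => Nc F cs x / x ^ 3) (𝓝[>] 0) (𝓝 (-k / 3)) := by
    rw [hk]
    refine tendsto_Nc_div_pow_three cs
      (hFeq ▸ eventually_hasDerivAt_integral_left hU hf.continuousOn h1U)
      (eventually_of_mem (hU.mem_nhds h1U) hdf) hdf' (by simp [hF]) hf1 ?_
    rw [hcs, sq_sqrt (by linarith), neg_mul]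
  have hIoo : Set.Ioo c₀ cs ∈ 𝓝[<] cs := Ioo_mem_nhdsLT hc₀cs
  have hξ : Tendsto ξ (𝓝[<] cs) (𝓝[>] 0) :=
    tendsto_nhdsWithin_iff.mpr ⟨hξ0, eventually_of_mem hIoo fun c hc => (hξmem c hc).1⟩
  have hval : (-k / 3)⁻¹ = -3 / k := by rw [inv_div, div_neg, neg_div]
  refine hval ▸ ((hG.comp hξ).inv₀ (by simpa using hk0)).congr' ?_
  filter_upwards [hIoo] with c hc
  have hNc : Nc F cs (ξ c) = (cs ^ 2 - c ^ 2) * ξ c ^ 2 := by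
    rw [← Nc_sub_Nc F c, show Nc F c (ξ c) = 0 from hzero c hc, sub_zero]
  have hξne : ξ c ≠ 0 := (hξmem c hc).1.ne'
  simp only [Function.comp_apply, hNc]
  field_simp

/-- Asymptotics of the first zero of `N_c`: `ξ(c)/(c_s² - c²) → -3/k` as `c → c_s⁻`. -/
theorem stmt_5 (f : ℝ → ℝ) (U : Set ℝ) (hU : IsOpen U) (hUIcc : Set.Icc (0:ℝ) 1 ⊆ U)
    (hf : ContDiffOn ℝ 3 f U) (hf1 : f 1 = 0) (hf'1 : deriv f 1 < 0)
    (cs k : ℝ) (hcs : cs = Real.sqrt (-(2 * deriv f 1)))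
    (hk : k = 2 * deriv (deriv f) 1 + 6 * deriv f 1) (hk0 : k ≠ 0)
    (F : ℝ → ℝ) (hF : ∀ r, F r = ∫ ρ in r..1, f ρ)
    (c₀ : ℝ) (hc₀ : 0 < c₀) (hc₀cs : c₀ < cs)
    (ξ : ℝ → ℝ)
    (hξmem : ∀ c ∈ Set.Ioo c₀ cs, ξ c ∈ Set.Ioo (0:ℝ) 1)
    (hzero : ∀ c ∈ Set.Ioo c₀ cs,
      c ^ 2 * (ξ c) ^ 2 - 4 * (1 - ξ c) * F (1 - ξ c) = 0)
    (hξ0 : Tendsto ξ (𝓝[<] cs) (𝓝 0)) :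
    Tendsto (fun c => ξ c / (cs ^ 2 - c ^ 2)) (𝓝[<] cs) (𝓝 (-3 / k)) :=
  stmt_5_general f U hU hUIcc hf hf1 hf'1 cs k hcs hk hk0 F hF c₀ hc₀cs ξ hξmem hzero hξ0
end

section
/- Let N ≥ 1 be an integer, let K > 0, ν > 0, L > 0 and ε ∈ (0,1). Let a_1 < a_2 < … < a_N be real numbers with a_{k+1} − a_k > L for every k, and let η_1, …, η_N : ℝ → ℝ satisfy |η_k(x)| ≤ K e^{−ν|x − a_k|} for every x ∈ ℝ and sup_{x ∈ ℝ} |η_k(x)| ≤ ε for every k. Then for every x ∈ ℝ, |Σ_{k=1}^N η_k(x)| ≤ ε + N(N−1) K e^{−2νL/3} + N K e^{−νL/3}. -/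
open Real

/-- Uniform bound on a sum of exponentially localized bumps centered at
well-separated points. -/
theorem stmt_6 (N : ℕ) (hN : 1 ≤ N) (K ν L ε : ℝ)
    (hK : 0 < K) (hν : 0 < ν) (hL : 0 < L) (hε : ε ∈ Set.Ioo (0:ℝ) 1)
    (a : Fin N → ℝ)
    (ha : ∀ (k : ℕ) (hk : k + 1 < N), L < a ⟨k + 1, hk⟩ - a ⟨k, Nat.lt_of_succ_lt hk⟩)
    (η : Fin N → ℝ → ℝ)
    (hdecay : ∀ k x, |η k x| ≤ K * Real.exp (-(ν * |x - a k|)))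
    (hbound : ∀ k x, |η k x| ≤ ε) :
    ∀ x : ℝ, |∑ k, η k x| ≤
      ε + (N : ℝ) * ((N : ℝ) - 1) * K * Real.exp (-(2 * ν * L / 3))
        + (N : ℝ) * K * Real.exp (-(ν * L / 3)) := by
  intro x
  -- Separation of centers
  have key : ∀ (k m : ℕ) (hk : k < N) (hm : m < N), k < m →
      L < a ⟨m, hm⟩ - a ⟨k, hk⟩ := by
    intro k m
    induction m with
    | zero => intro hk hm hkm; omega
    | succ j ih =>
      intro hk hm hkm
      rcases Nat.lt_or_ge k j with h | h
      · have h1 : j < N := by omega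
        have h2 := ih hk h1 h
        have h3 := ha j hm
        linarith
      · have : k = j := by omega
        subst this
        exact ha k hm
  have hsep : ∀ i j : Fin N, i ≠ j → L < |a i - a j| := by
    intro i j hij
    rcases lt_trichotomy (i : ℕ) (j : ℕ) with h | h | h
    · have := key i j i.isLt j.isLt h
      simp only [Fin.eta] at this
      rw [abs_sub_comm, abs_of_pos (by linarith)]
      linarith
    · exact absurd (Fin.ext h) hij
    · have := key j i j.isLt i.isLt h
      simp only [Fin.eta] at this
      rw [abs_of_pos (by linarith)]
      linarith
  have habs : |∑ k, η k x| ≤ ∑ k, |η k x| := Finset.abs_sum_le_sum_abs _ _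
  have hposE1 : (0:ℝ) < Real.exp (-(ν * L / 3)) := Real.exp_pos _
  have hposE2 : (0:ℝ) < Real.exp (-(2 * ν * L / 3)) := Real.exp_pos _
  have hNpos : (1:ℝ) ≤ (N:ℝ) := by exact_mod_cast hN
  by_cases hclose : ∃ k0 : Fin N, |x - a k0| ≤ L / 3
  · obtain ⟨k0, hk0⟩ := hclose
    have hsplit : ∑ k, |η k x| = |η k0 x| + ∑ k ∈ Finset.univ.erase k0, |η k x| :=
      (Finset.add_sum_erase _ _ (Finset.mem_univ k0)).symm
    have hterm : ∀ k ∈ Finset.univ.erase k0, |η k x| ≤ K * Real.exp (-(2 * ν * L / 3)) := by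
      intro k hk
      have hne : k ≠ k0 := (Finset.mem_erase.mp hk).1
      have hfar : 2 * L / 3 ≤ |x - a k| := by
        have h1 := hsep k k0 hne
        have h2 : |a k - a k0| ≤ |x - a k| + |x - a k0| := by
          have := abs_sub_abs_le_abs_sub (x - a k0) (x - a k)
          have h3 : |(x - a k0) - (x - a k)| = |a k - a k0| := by
            rw [show (x - a k0) - (x - a k) = a k - a k0 by ring]
          calc |a k - a k0| = |(x - a k0) - (x - a k)| := h3.symm
            _ ≤ |x - a k0| + |x - a k| := abs_sub _ _
            _ = |x - a k| + |x - a k0| := by ring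
        linarith
      calc |η k x| ≤ K * Real.exp (-(ν * |x - a k|)) := hdecay k x
        _ ≤ K * Real.exp (-(2 * ν * L / 3)) := by
            apply mul_le_mul_of_nonneg_left _ hK.le
            apply Real.exp_le_exp.mpr
            nlinarith
    have hsum : ∑ k ∈ Finset.univ.erase k0, |η k x|
        ≤ ((N : ℝ) - 1) * (K * Real.exp (-(2 * ν * L / 3))) := by
      have hcard : (Finset.univ.erase k0).card = N - 1 := by
        simp [Finset.card_erase_of_mem]
      calc ∑ k ∈ Finset.univ.erase k0, |η k x|
          ≤ (Finset.univ.erase k0).card • (K * Real.exp (-(2 * ν * L / 3))) :=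
            Finset.sum_le_card_nsmul _ _ _ hterm
        _ = ((N - 1 : ℕ) : ℝ) * (K * Real.exp (-(2 * ν * L / 3))) := by
            rw [hcard, nsmul_eq_mul]
        _ = ((N : ℝ) - 1) * (K * Real.exp (-(2 * ν * L / 3))) := by
            rw [Nat.cast_sub hN, Nat.cast_one]
    have h1 : |η k0 x| ≤ ε := hbound k0 x
    have hfin : ((N : ℝ) - 1) * (K * Real.exp (-(2 * ν * L / 3)))
        ≤ (N : ℝ) * ((N : ℝ) - 1) * K * Real.exp (-(2 * ν * L / 3)) := by
      nlinarith [sq_nonneg ((N:ℝ) - 1), mul_pos hK hposE2]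
    have hlast : (0:ℝ) ≤ (N : ℝ) * K * Real.exp (-(ν * L / 3)) := by positivity
    linarith [habs, hsplit ▸ le_refl (∑ k, |η k x|)]
  · push_neg at hclose
    have hterm : ∀ k ∈ Finset.univ, |η k x| ≤ K * Real.exp (-(ν * L / 3)) := by
      intro k _
      have hfar := (hclose k).le
      calc |η k x| ≤ K * Real.exp (-(ν * |x - a k|)) := hdecay k x
        _ ≤ K * Real.exp (-(ν * L / 3)) := by
            apply mul_le_mul_of_nonneg_left _ hK.le
            apply Real.exp_le_exp.mpr
            nlinarith
    have hsum : ∑ k, |η k x| ≤ (N : ℝ) * (K * Real.exp (-(ν * L / 3))) := by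
      calc ∑ k, |η k x| ≤ (Finset.univ : Finset (Fin N)).card • (K * Real.exp (-(ν * L / 3))) :=
            Finset.sum_le_card_nsmul _ _ _ hterm
        _ = (N : ℝ) * (K * Real.exp (-(ν * L / 3))) := by
            simp [nsmul_eq_mul]
    have hmid : (0:ℝ) ≤ (N : ℝ) * ((N : ℝ) - 1) * K * Real.exp (-(2 * ν * L / 3)) := by
      have : (0:ℝ) ≤ (N:ℝ) - 1 := by linarith
      positivity
    have hε0 := hε.1
    nlinarith [habs]
end

section
/- Let N ≥ 2 be an integer and R > 0. There exists a constant C ≥ 0 such that for all real numbers η_1, …, η_N with |η_k| ≤ R for every k, one has |F(1 − Σ_{k=1}^N η_k) − Σ_{k=1}^N F(1 − η_k)| ≤ C (S^{2,N} + S^{3,N} + B^N + C^N)(|η_1|, …, |η_N|). -/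
/-!
Writing `g s = F (1 - s) = ∫_{1-s}^1 f`, the defect `g (s + t) - g s - g t` equals
`∫_{1-t}^1 (f (x - s) - f x) dx`, so it is bounded by `K |s| |t|` where `K` is a Lipschitz constant
of `f` on a compact interval containing all partial sums of the `η k`. Adding the `η k` one at a
time, in increasing order of `k`, the defects add up to at most `K · S^{2,N}(|η|)`; the remaining terms are
nonnegative.
-/

open Real MeasureTheory Set Finset

theorem sum_sum_ite_lt_insert_of_forall_lt {ι R : Type*} [LinearOrder ι] [CommSemiring R] (w : ι → R) {a : ι} {s : Finset ι}
    (ha : ∀ x ∈ s, x < a) :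
    ∑ i ∈ insert a s, ∑ j ∈ insert a s, (if i < j then w i * w j else 0) =
      ∑ i ∈ s, ∑ j ∈ s, (if i < j then w i * w j else 0) + (∑ i ∈ s, w i) * w a := by
  have has : a ∉ s := fun h => lt_irrefl a (ha a h)
  have hnot : ∀ x ∈ s, ¬ a < x := fun x hx => (ha x hx).not_gt
  simp only [sum_insert has, lt_irrefl, if_false, zero_add, sum_add_distrib, sum_mul]
  rw [sum_congr rfl fun x hx => if_neg (hnot x hx), sum_const_zero, zero_add,
    sum_congr rfl fun x hx => if_pos (ha x hx)]
  ring

theorem abs_sub_sum_le_sum_sum_ite_lt {ι : Type*} [LinearOrder ι] {g : ℝ → ℝ} {K M : ℝ}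
    (hK : 0 ≤ K) (hg0 : g 0 = 0)
    (hg : ∀ s t, |s| ≤ M → |t| ≤ M → |g (s + t) - g s - g t| ≤ K * |s| * |t|)
    (η : ι → ℝ) (u : Finset ι) (hu : ∑ k ∈ u, |η k| ≤ M) :
    |g (∑ k ∈ u, η k) - ∑ k ∈ u, g (η k)| ≤
      K * ∑ i ∈ u, ∑ j ∈ u, (if i < j then |η i| * |η j| else 0) := by
  induction u using Finset.induction_on_max with
  | empty => simp [hg0]
  | insert a s ha ih =>
    have has : a ∉ s := fun h => lt_irrefl a (ha a h)
    rw [sum_insert has] at hu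
    have hs : ∑ k ∈ s, |η k| ≤ M := by linarith [abs_nonneg (η a)]
    have hsum : |∑ k ∈ s, η k| ≤ ∑ k ∈ s, |η k| := abs_sum_le_sum_abs _ _
    have hηa : |η a| ≤ M := by linarith [sum_nonneg fun k (_ : k ∈ s) => abs_nonneg (η k)]
    have hstep := hg (∑ k ∈ s, η k) (η a) (hsum.trans hs) hηa
    rw [sum_sum_ite_lt_insert_of_forall_lt _ ha, sum_insert has, sum_insert has]
    calc |g (η a + ∑ k ∈ s, η k) - (g (η a) + ∑ k ∈ s, g (η k))|
        = |(g (∑ k ∈ s, η k + η a) - g (∑ k ∈ s, η k) - g (η a))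
            + (g (∑ k ∈ s, η k) - ∑ k ∈ s, g (η k))| := by rw [add_comm (η a)]; ring
      _ ≤ K * |∑ k ∈ s, η k| * |η a|
            + K * ∑ i ∈ s, ∑ j ∈ s, (if i < j then |η i| * |η j| else 0) :=
          (abs_add_le _ _).trans (add_le_add hstep (ih hs))
      _ ≤ K * (∑ i ∈ s, ∑ j ∈ s, (if i < j then |η i| * |η j| else 0)
            + (∑ i ∈ s, |η i|) * |η a|) := by
          rw [mul_add, add_comm, mul_assoc]
          gcongr

theorem integral_shift_defect_eq {f : ℝ → ℝ} (hf : Continuous f) (c s t : ℝ) :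
    (∫ x in c - (s + t)..c, f x) - (∫ x in c - s..c, f x) - ∫ x in c - t..c, f x =
      ∫ x in c - t..c, (f (x - s) - f x) := by
  have hsplit := intervalIntegral.integral_add_adjacent_intervals
    (hf.intervalIntegrable (μ := volume) (c - (s + t)) (c - s)) (hf.intervalIntegrable _ c)
  have hshift : (∫ x in c - (s + t)..c - s, f x) = ∫ x in c - t..c, f (x - s) := by
    rw [intervalIntegral.integral_comp_sub_right]
    ring_nf
  have hf_shift : Continuous fun x => f (x - s) := hf.comp (continuous_sub_right s)
  rw [intervalIntegral.integral_sub (hf_shift.intervalIntegrable _ _) (hf.intervalIntegrable _ _),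
    ← hshift, ← hsplit]
  ring

theorem abs_integral_shift_defect_le {f : ℝ → ℝ} {K : NNReal} {c M s t : ℝ} (hf : Continuous f)
    (hK : LipschitzOnWith K f (Icc (c - 2 * M) (c + 2 * M))) (hs : |s| ≤ M) (ht : |t| ≤ M) :
    |(∫ x in c - (s + t)..c, f x) - (∫ x in c - s..c, f x) - ∫ x in c - t..c, f x| ≤
      K * |s| * |t| := by
  obtain ⟨hs₁, hs₂⟩ := abs_le.mp hs
  obtain ⟨ht₁, ht₂⟩ := abs_le.mp ht
  have hpointwise : ∀ x ∈ uIoc (c - t) c, ‖f (x - s) - f x‖ ≤ K * |s| := fun x hx => by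
    have : c - M ≤ x ∧ x ≤ c + M := by
      rcases Set.mem_uIoc.mp hx with h | h <;> constructor <;> linarith [h.1, h.2]
    simpa [Real.dist_eq] using hK.dist_le_mul (x - s) ⟨by linarith, by linarith⟩ x
      ⟨by linarith, by linarith⟩
  rw [integral_shift_defect_eq hf, ← Real.norm_eq_abs]
  calc ‖∫ x in c - t..c, (f (x - s) - f x)‖ ≤ K * |s| * |c - (c - t)| :=
        intervalIntegral.norm_integral_le_of_norm_le_const hpointwise
    _ = K * |s| * |t| := by rw [sub_sub_cancel]

theorem stmt_7_general (f : ℝ → ℝ) (hf : ContDiff ℝ 3 f)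
    (F : ℝ → ℝ) (hF : ∀ r, F r = ∫ ρ in r..1, f ρ)
    (N : ℕ) (R : ℝ) :
    ∃ C : ℝ, 0 ≤ C ∧ ∀ η : Fin N → ℝ, (∀ k, |η k| ≤ R) →
      |F (1 - ∑ k, η k) - ∑ k, F (1 - η k)| ≤
        C * ((∑ i : Fin N, ∑ j : Fin N, if i < j then |η i| * |η j| else 0)
          + (∑ i : Fin N, ∑ j : Fin N, ∑ l : Fin N,
              if i < j ∧ j < l then |η i| * |η j| * |η l| else 0)
          + (∑ i : Fin N, ∑ j : Fin N, if j ≠ i then |η i| ^ 2 * |η j| else 0)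
          + (∑ i : Fin N, ∑ j : Fin N, if j ≠ i then |η i| ^ 3 * |η j| else 0)) := by
  set M : ℝ := N * R
  obtain ⟨K, hK⟩ := hf.contDiffOn.exists_lipschitzOnWith (by norm_num) (convex_Icc _ _)
    (isCompact_Icc (a := 1 - 2 * M) (b := 1 + 2 * M))
  refine ⟨K, K.2, fun η hη => ?_⟩
  have hsum : ∑ k, |η k| ≤ M := by
    simpa [M] using Finset.sum_le_sum fun k (_ : k ∈ Finset.univ) => hη k
  have hdefect := abs_sub_sum_le_sum_sum_ite_lt (g := fun s => F (1 - s)) K.2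
    (by simp [hF]) (fun s t hs ht => by
      simp only [hF]; exact abs_integral_shift_defect_le hf.continuous hK hs ht)
    η univ hsum
  refine hdefect.trans ?_
  simp only [add_assoc]
  refine mul_le_mul_of_nonneg_left (le_add_of_nonneg_right ?_) K.2
  positivity

/-- Expansion of `F(1 - Ση_k) - ΣF(1 - η_k)` in terms of the coupled
symmetric quantities `S^{2,N}, S^{3,N}, B^N, C^N`. -/
theorem stmt_7 (f : ℝ → ℝ) (hf : ContDiff ℝ 3 f) (hf1 : f 1 = 0)
    (F : ℝ → ℝ) (hF : ∀ r, F r = ∫ ρ in r..1, f ρ)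
    (N : ℕ) (hN : 2 ≤ N) (R : ℝ) (hR : 0 < R) :
    ∃ C : ℝ, 0 ≤ C ∧ ∀ η : Fin N → ℝ, (∀ k, |η k| ≤ R) →
      |F (1 - ∑ k, η k) - ∑ k, F (1 - η k)| ≤
        C * ((∑ i : Fin N, ∑ j : Fin N, if i < j then |η i| * |η j| else 0)
          + (∑ i : Fin N, ∑ j : Fin N, ∑ l : Fin N,
              if i < j ∧ j < l then |η i| * |η j| * |η l| else 0)
          + (∑ i : Fin N, ∑ j : Fin N, if j ≠ i then |η i| ^ 2 * |η j| else 0)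
          + (∑ i : Fin N, ∑ j : Fin N, if j ≠ i then |η i| ^ 3 * |η j| else 0)) :=
  stmt_7_general f hf F hF N R
end

section
/- Assume k := 2 f''(1) + 6 f'(1) ≠ 0. Let 0 < c₀ < c_s and let ξ : (c₀, c_s) → (0,1) be differentiable and satisfy, for every c ∈ (c₀, c_s): N_c(ξ(c)) = 0, ∂_x N_c(ξ(c)) ≠ 0, and ξ(c) → 0 as c → c_s⁻. Then ξ'(c) → 6 c_s / k as c → c_s⁻. -/
/-!
Differentiating `N_c(ξ(c)) = 0` in `c` gives `ξ' = -2cξ² / ∂ₓN_c(ξ)`. On the zero set,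
`ξ · ∂ₓN_c(ξ) = (8 - 4ξ) F(1 - ξ) - 4ξ(1 - ξ) f(1 - ξ) =: H(ξ)` no longer involves `c`, so
`ξ' = -2c / (H(ξ) / ξ³)`. The function `H` vanishes to second order at `0` and
`H''(x) / x → -12 f'(1) - 4 f''(1) = -2k`, so two applications of l'Hôpital's rule give
`H(x) / x³ → -k/3`; letting `ξ → 0` as `c → c_s⁻` yields `ξ' → 6 c_s / k`.
-/

open Real MeasureTheory Filter Topology Set

theorem hasDerivAt_integral_left_of_continuousOn {f : ℝ → ℝ} {U : Set ℝ} {r b : ℝ}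
    (hU : IsOpen U) (hf : ContinuousOn f U) (hr : uIcc r b ⊆ U) :
    HasDerivAt (fun u => ∫ x in u..b, f x) (-f r) r :=
  have hrU : r ∈ U := hr left_mem_uIcc
  intervalIntegral.integral_hasDerivAt_left ((hf.mono hr).intervalIntegrable)
    (hf.stronglyMeasurableAtFilter hU r hrU) (hf.continuousAt (hU.mem_nhds hrU))

theorem tendsto_div_cube_of_hasDerivAt_of_hasDerivAt {H H₁ H₂ : ℝ → ℝ} {δ L : ℝ} (hδ : 0 < δ)
    (hH : ∀ x ∈ Ioo 0 δ, HasDerivAt H (H₁ x) x) (hH₁ : ∀ x ∈ Ioo 0 δ, HasDerivAt H₁ (H₂ x) x)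
    (hH0 : Tendsto H (𝓝[>] 0) (𝓝 0)) (hH₁0 : Tendsto H₁ (𝓝[>] 0) (𝓝 0))
    (hH₂ : Tendsto (fun x => H₂ x / x) (𝓝[>] 0) (𝓝 L)) :
    Tendsto (fun x => H x / x ^ 3) (𝓝[>] 0) (𝓝 (L / 6)) := by
  have hsq0 : Tendsto (fun x : ℝ => 3 * x ^ 2) (𝓝[>] 0) (𝓝 0) :=
    tendsto_nhdsWithin_of_tendsto_nhds <| by
      simpa using ((continuous_pow 2).const_mul (3 : ℝ)).tendsto 0
  have hcube0 : Tendsto (fun x : ℝ => x ^ 3) (𝓝[>] 0) (𝓝 0) :=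
    tendsto_nhdsWithin_of_tendsto_nhds (by simpa using (continuous_pow 3).tendsto (0 : ℝ))
  have h₂ : Tendsto (fun x => H₂ x / (6 * x)) (𝓝[>] 0) (𝓝 (L / 6)) :=
    (hH₂.div_const 6).congr fun x => by rw [div_div, mul_comm]
  have h₁ : Tendsto (fun x => H₁ x / (3 * x ^ 2)) (𝓝[>] 0) (𝓝 (L / 6)) :=
    HasDerivAt.lhopital_zero_right_on_Ioo hδ hH₁
      (fun x _ => ((hasDerivAt_pow 2 x).const_mul 3).congr_deriv (by ring))
      (fun x hx => by have := hx.1; positivity) hH₁0 hsq0 h₂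
  exact HasDerivAt.lhopital_zero_right_on_Ioo hδ hH (fun x _ => by simpa using hasDerivAt_pow 3 x)
    (fun x hx => by have := hx.1; positivity) hH0 hcube0 h₁

-- The function `H` above, with `G = F (1 - ·)` and `φ = f (1 - ·)`.
def scaledSlope (G φ : ℝ → ℝ) (x : ℝ) : ℝ := (8 - 4 * x) * G x - 4 * x * (1 - x) * φ x

theorem tendsto_scaledSlope_div_cube {G φ φ₁ φ₂ : ℝ → ℝ} {a b : ℝ}
    (hG : ∀ x ∈ Ioo 0 1, HasDerivAt G (φ x) x) (hφ : ∀ x ∈ Ioo 0 1, HasDerivAt φ (φ₁ x) x)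
    (hφ₁ : ∀ x ∈ Ioo 0 1, HasDerivAt φ₁ (φ₂ x) x)
    (hG0 : Tendsto G (𝓝[>] 0) (𝓝 0)) (hφ0 : Tendsto φ (𝓝[>] 0) (𝓝 0))
    (hφ₁a : Tendsto φ₁ (𝓝[>] 0) (𝓝 a)) (hφ₂b : Tendsto φ₂ (𝓝[>] 0) (𝓝 b)) :
    Tendsto (fun x => scaledSlope G φ x / x ^ 3) (𝓝[>] 0) (𝓝 ((12 * a - 4 * b) / 6)) := by
  have hid : Tendsto (fun x : ℝ => x) (𝓝[>] 0) (𝓝 0) := nhdsWithin_le_nhds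
  have hid' (x : ℝ) : HasDerivAt (fun y : ℝ => y) 1 x := hasDerivAt_id' x
  refine tendsto_div_cube_of_hasDerivAt_of_hasDerivAt one_pos
    (H₁ := fun x => -4 * G x + (4 + 4 * x) * φ x - 4 * (x - x ^ 2) * φ₁ x)
    (H₂ := fun x => 12 * x * φ₁ x - 4 * (x - x ^ 2) * φ₂ x) (fun x hx => ?_) (fun x hx => ?_)
    ?_ ?_ ?_
  · have h₁ := (((hid' x).const_mul 4).const_sub 8).fun_mul (hG x hx)
    have h₂ := (((hid' x).const_mul 4).fun_mul ((hid' x).const_sub 1)).fun_mul (hφ x hx)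
    exact (h₁.fun_sub h₂).congr_deriv (by ring)
  · have h₁ := (hG x hx).const_mul (-4)
    have h₂ := (((hid' x).const_mul 4).const_add 4).fun_mul (hφ x hx)
    have h₃ := (((hid' x).fun_sub (hasDerivAt_pow 2 x)).const_mul 4).fun_mul (hφ₁ x hx)
    exact ((h₁.fun_add h₂).fun_sub h₃).congr_deriv (by ring)
  · unfold scaledSlope
    simpa using ((tendsto_const_nhds.sub (hid.const_mul 4)).mul hG0).sub
      (((hid.const_mul 4).mul (tendsto_const_nhds.sub hid)).mul hφ0)
  · simpa using ((hG0.const_mul (-4)).add ((tendsto_const_nhds.add (hid.const_mul 4)).mul hφ0)).sub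
      (((hid.sub (hid.pow 2)).const_mul 4).mul hφ₁a)
  · have hlim :
        Tendsto (fun x => 12 * φ₁ x - 4 * (1 - x) * φ₂ x) (𝓝[>] 0) (𝓝 (12 * a - 4 * b)) := by
      simpa using (hφ₁a.const_mul 12).sub
        ((((tendsto_const_nhds (x := (1 : ℝ))).sub hid).const_mul 4).mul hφ₂b)
    refine hlim.congr' (eventually_nhdsWithin_of_forall fun x (hx : 0 < x) => ?_)
    field_simp

theorem implicit_deriv_sq_mul_sq_eq {Q ξ : ℝ → ℝ} {q ξ' c : ℝ} (hQ : HasDerivAt Q q (ξ c))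
    (hξ : HasDerivAt ξ ξ' c) (hzero : ∀ᶠ c' in 𝓝 c, c' ^ 2 * ξ c' ^ 2 - Q (ξ c') = 0) :
    2 * c * ξ c ^ 2 + (2 * c ^ 2 * ξ c - q) * ξ' = 0 := by
  have hΦ : HasDerivAt (fun c' => c' ^ 2 * ξ c' ^ 2 - Q (ξ c'))
      (2 * c * ξ c ^ 2 + (2 * c ^ 2 * ξ c - q) * ξ') c :=
    ((hasDerivAt_pow 2 c).fun_mul (hξ.fun_pow 2)).fun_sub (hQ.comp c hξ)
      |>.congr_deriv (by norm_num; ring)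
  exact hΦ.unique ((hasDerivAt_const c 0).congr_of_eventuallyEq hzero)

theorem eq_neg_div_scaledSlope_div_cube {G φ ξ : ℝ → ℝ} {c ξ' : ℝ}
    (hG : HasDerivAt G (φ (ξ c)) (ξ c)) (hξ : HasDerivAt ξ ξ' c)
    (hzero : ∀ᶠ c' in 𝓝 c, c' ^ 2 * ξ c' ^ 2 - 4 * (1 - ξ c') * G (ξ c') = 0) (hξc : ξ c ≠ 0)
    (hD : deriv (fun x => c ^ 2 * x ^ 2 - 4 * (1 - x) * G x) (ξ c) ≠ 0) :
    ξ' = -(2 * c) / (scaledSlope G φ (ξ c) / ξ c ^ 3) := by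
  set x := ξ c
  have hQ : HasDerivAt (fun x => 4 * (1 - x) * G x) (-4 * G x + 4 * (1 - x) * φ x) x :=
    ((hasDerivAt_id' x).const_sub 1 |>.const_mul 4).fun_mul hG |>.congr_deriv (by ring)
  have hrel := implicit_deriv_sq_mul_sq_eq hQ hξ hzero
  have hD' : 2 * c ^ 2 * x - (-4 * G x + 4 * (1 - x) * φ x) ≠ 0 := by
    rw [(((hasDerivAt_pow 2 x).const_mul (c ^ 2)).fun_sub hQ).deriv] at hD
    convert hD using 2
    norm_num
    ring
  have hslope : x * (2 * c ^ 2 * x - (-4 * G x + 4 * (1 - x) * φ x)) = scaledSlope G φ x := by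
    unfold scaledSlope
    linear_combination 2 * hzero.self_of_nhds
  rw [← hslope, eq_div_iff (div_ne_zero (mul_ne_zero hξc hD') (pow_ne_zero 3 hξc))]
  field_simp
  linear_combination hrel

theorem hasDerivAt_integral_comp_one_sub {f F : ℝ → ℝ} {U : Set ℝ} (hU : IsOpen U)
    (hUIcc : Icc 0 1 ⊆ U) (hf : ContinuousOn f U) (hF : ∀ r, F r = ∫ ρ in r..1, f ρ) {x : ℝ}
    (hx : x ∈ Icc 0 1) : HasDerivAt (fun y => F (1 - y)) (f (1 - x)) x := by
  have h1x : 1 - x ∈ Icc (0 : ℝ) 1 := ⟨by linarith [hx.2], by linarith [hx.1]⟩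
  have hFd : HasDerivAt F (-f (1 - x)) (1 - x) := funext hF ▸
    hasDerivAt_integral_left_of_continuousOn hU hf
      ((uIcc_subset_Icc h1x ⟨zero_le_one, le_rfl⟩).trans hUIcc)
  simpa using hFd.comp_const_sub 1 x

theorem tendsto_scaledSlope_integral_div_cube {f F : ℝ → ℝ} {U : Set ℝ} (hU : IsOpen U)
    (hUIcc : Icc 0 1 ⊆ U) (hf : ContDiffOn ℝ 2 f U) (hf1 : f 1 = 0)
    (hF : ∀ r, F r = ∫ ρ in r..1, f ρ) :
    Tendsto (fun x => scaledSlope (fun y => F (1 - y)) (fun y => f (1 - y)) x / x ^ 3) (𝓝[>] 0)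
      (𝓝 (-(2 * deriv (deriv f) 1 + 6 * deriv f 1) / 3)) := by
  have hf' : ContDiffOn ℝ 1 (deriv f) U := hf.deriv_of_isOpen hU (by norm_num)
  have h1U : (1 : ℝ) ∈ U := hUIcc ⟨zero_le_one, le_rfl⟩
  have hsub : ∀ x ∈ Ioo (0 : ℝ) 1, 1 - x ∈ U := fun x hx =>
    hUIcc ⟨by linarith [hx.2], by linarith [hx.1]⟩
  have hderiv {g : ℝ → ℝ} (hg : DifferentiableOn ℝ g U) (x : ℝ) (hx : x ∈ Ioo 0 1) :
      HasDerivAt (fun y => g (1 - y)) (-deriv g (1 - x)) x :=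
    ((hg.differentiableAt (hU.mem_nhds (hsub x hx))).hasDerivAt).comp_const_sub 1 x
  have hlim {g : ℝ → ℝ} (hg : ContinuousAt g 1) :
      Tendsto (fun y => g (1 - y)) (𝓝[>] 0) (𝓝 (g 1)) :=
    tendsto_nhdsWithin_of_tendsto_nhds
      (hg.tendsto.comp ((continuous_sub_left 1).tendsto' 0 1 (sub_zero 1)))
  have hG : ∀ x ∈ Icc (0 : ℝ) 1, HasDerivAt (fun y => F (1 - y)) (f (1 - x)) x := fun _ hx =>
    hasDerivAt_integral_comp_one_sub hU hUIcc hf.continuousOn hF hx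
  have hG0 : Tendsto (fun y => F (1 - y)) (𝓝[>] 0) (𝓝 0) := by
    simpa [hF] using ((hG 0 ⟨le_rfl, zero_le_one⟩).continuousAt.tendsto).mono_left
      nhdsWithin_le_nhds
  have hφ0 : Tendsto (fun y => f (1 - y)) (𝓝[>] 0) (𝓝 0) :=
    hf1 ▸ hlim (hf.continuousOn.continuousAt (hU.mem_nhds h1U))
  have hφ₁ (x : ℝ) (hx : x ∈ Ioo 0 1) :
      HasDerivAt (fun y => -deriv f (1 - y)) (deriv (deriv f) (1 - x)) x := by
    simpa using (hderiv (hf'.differentiableOn one_ne_zero) x hx).fun_neg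
  convert tendsto_scaledSlope_div_cube (fun x hx => hG x (Ioo_subset_Icc_self hx))
    (hderiv (hf.differentiableOn (by norm_num))) hφ₁ hG0 hφ0
    (hlim (hf'.continuousOn.continuousAt (hU.mem_nhds h1U))).neg
    (hlim ((hf'.continuousOn_deriv_of_isOpen hU le_rfl).continuousAt (hU.mem_nhds h1U)))
    using 2
  ring

theorem stmt_15_general (f : ℝ → ℝ) (U : Set ℝ) (hU : IsOpen U) (hUIcc : Set.Icc (0:ℝ) 1 ⊆ U)
    (hf : ContDiffOn ℝ 3 f U) (hf1 : f 1 = 0)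
    (cs k : ℝ)
    (hk : k = 2 * deriv (deriv f) 1 + 6 * deriv f 1) (hk0 : k ≠ 0)
    (F : ℝ → ℝ) (hF : ∀ r, F r = ∫ ρ in r..1, f ρ)
    (c₀ : ℝ) (hc₀cs : c₀ < cs)
    (ξ : ℝ → ℝ)
    (hξmem : ∀ c ∈ Set.Ioo c₀ cs, ξ c ∈ Set.Ioo (0:ℝ) 1)
    (hξdiff : ∀ c ∈ Set.Ioo c₀ cs, DifferentiableAt ℝ ξ c)
    (hzero : ∀ c ∈ Set.Ioo c₀ cs,
      c ^ 2 * (ξ c) ^ 2 - 4 * (1 - ξ c) * F (1 - ξ c) = 0)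
    (hdN : ∀ c ∈ Set.Ioo c₀ cs,
      deriv (fun x => c ^ 2 * x ^ 2 - 4 * (1 - x) * F (1 - x)) (ξ c) ≠ 0)
    (hξ0 : Tendsto ξ (𝓝[<] cs) (𝓝 0)) :
    Tendsto (fun c => deriv ξ c) (𝓝[<] cs) (𝓝 (6 * cs / k)) := by
  have hmem : Ioo c₀ cs ∈ 𝓝[<] cs := Ioo_mem_nhdsLT hc₀cs
  have hξ0' : Tendsto ξ (𝓝[<] cs) (𝓝[>] 0) := tendsto_nhdsWithin_iff.2
    ⟨hξ0, by filter_upwards [hmem] with c hc using (hξmem c hc).1⟩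
  have hslope := tendsto_scaledSlope_integral_div_cube hU hUIcc (hf.of_le (by norm_num)) hf1 hF
  rw [← hk] at hslope
  have hformula : ∀ c ∈ Ioo c₀ cs, deriv ξ c =
      -(2 * c) / (scaledSlope (fun y => F (1 - y)) (fun y => f (1 - y)) (ξ c) / ξ c ^ 3) :=
    fun c hc => eq_neg_div_scaledSlope_div_cube
      (hasDerivAt_integral_comp_one_sub hU hUIcc hf.continuousOn hF
        (Ioo_subset_Icc_self (hξmem c hc)))
      (hξdiff c hc).hasDerivAt
      (by filter_upwards [isOpen_Ioo.mem_nhds hc] with c' hc' using hzero c' hc')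
      (hξmem c hc).1.ne' (hdN c hc)
  have hlim := (((tendsto_id.const_mul 2).neg).mono_left nhdsWithin_le_nhds).div
    (hslope.comp hξ0') (by simpa using hk0)
  convert hlim.congr' (by filter_upwards [hmem] with c hc using (hformula c hc).symm) using 2
  field_simp
  ring

/-- Limit of the derivative of the first zero: `ξ'(c) → 6c_s/k` as `c → c_s⁻`. -/
theorem stmt_15 (f : ℝ → ℝ) (U : Set ℝ) (hU : IsOpen U) (hUIcc : Set.Icc (0:ℝ) 1 ⊆ U)
    (hf : ContDiffOn ℝ 3 f U) (hf1 : f 1 = 0) (hf'1 : deriv f 1 < 0)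
    (cs k : ℝ) (hcs : cs = Real.sqrt (-(2 * deriv f 1)))
    (hk : k = 2 * deriv (deriv f) 1 + 6 * deriv f 1) (hk0 : k ≠ 0)
    (F : ℝ → ℝ) (hF : ∀ r, F r = ∫ ρ in r..1, f ρ)
    (c₀ : ℝ) (hc₀ : 0 < c₀) (hc₀cs : c₀ < cs)
    (ξ : ℝ → ℝ)
    (hξmem : ∀ c ∈ Set.Ioo c₀ cs, ξ c ∈ Set.Ioo (0:ℝ) 1)
    (hξdiff : ∀ c ∈ Set.Ioo c₀ cs, DifferentiableAt ℝ ξ c)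
    (hzero : ∀ c ∈ Set.Ioo c₀ cs,
      c ^ 2 * (ξ c) ^ 2 - 4 * (1 - ξ c) * F (1 - ξ c) = 0)
    (hdN : ∀ c ∈ Set.Ioo c₀ cs,
      deriv (fun x => c ^ 2 * x ^ 2 - 4 * (1 - x) * F (1 - x)) (ξ c) ≠ 0)
    (hξ0 : Tendsto ξ (𝓝[<] cs) (𝓝 0)) :
    Tendsto (fun c => deriv ξ c) (𝓝[<] cs) (𝓝 (6 * cs / k)) :=
  stmt_15_general f U hU hUIcc hf hf1 cs k hk hk0 F hF c₀ hc₀cs ξ hξmem hξdiff hzero hdN hξ0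
end
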